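/- arXiv:1702.01419 — 8 statements merged into one kernel-verified Lean document; each statement's English description precedes it below -/
import Mathlib

section
/- Let q > 1, τ ∈ (0,1], and α ∈ (0,1). Then the equation -(z - α)^q + (1-α)^{q-1} z^q = τ·α·(1-α)^{q-1} has a unique solution z = z(α, τ) in [1, ∞). -/
open Set

/-- Let `q > 1`, `τ ∈ (0,1]` and `α ∈ (0,1)`. Then the equation
`-(z - α)^q + (1-α)^{q-1} z^q = τ·α·(1-α)^{q-1}` has a unique solution `z ∈ [1, ∞)`. -/
theorem unique_solution_z (q τ α : ℝ) (hq : 1 < q) (hτ0 : 0 < τ) (hτ1 : τ ≤ 1)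
    (hα0 : 0 < α) (hα1 : α < 1) :
    ∃! z : ℝ, z ∈ Ici (1 : ℝ) ∧
      -(z - α) ^ q + (1 - α) ^ (q - 1) * z ^ q = τ * α * (1 - α) ^ (q - 1) := by
  have h1α : 0 < 1 - α := by linarith
  have hq0 : 0 < q := by linarith
  have hq1 : 0 < q - 1 := by linarith
  set c : ℝ := (1 - α) ^ (q - 1) with hc
  have hc0 : 0 < c := Real.rpow_pos_of_pos h1α _
  set f : ℝ → ℝ := fun z => -(z - α) ^ q + c * z ^ q with hf
  -- strict antitone on Ici 1
  have hcont : ∀ x ∈ Ici (1:ℝ), ContinuousWithinAt f (Ici 1) x := by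
    intro x hx
    have hx0 : (0:ℝ) < x - α := by simp only [mem_Ici] at hx; linarith
    have hx1 : (0:ℝ) < x := by simp only [mem_Ici] at hx; linarith
    apply ContinuousWithinAt.add
    · exact ((continuousWithinAt_id.sub continuousWithinAt_const).rpow_const
        (Or.inl hx0.ne')).neg
    · exact continuousWithinAt_const.mul
        (continuousWithinAt_id.rpow_const (Or.inl hx1.ne'))
  have hanti : StrictAntiOn f (Ici 1) := by
    apply strictAntiOn_of_deriv_neg (convex_Ici 1) hcont
    · intro x hx
      rw [interior_Ici, mem_Ioi] at hx
      have hx0 : (0:ℝ) < x - α := by linarith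
      have hx1 : (0:ℝ) < x := by linarith
      have hd1 : HasDerivAt (fun z : ℝ => (z - α) ^ q) (1 * q * (x - α) ^ (q - 1)) x :=
        ((hasDerivAt_id x).sub_const α).rpow_const (Or.inl hx0.ne')
      have hd2 : HasDerivAt (fun z : ℝ => z ^ q) (1 * q * x ^ (q - 1)) x :=
        (hasDerivAt_id x).rpow_const (Or.inl hx1.ne')
      have hd : HasDerivAt f (-(1 * q * (x - α) ^ (q - 1)) + c * (1 * q * x ^ (q - 1))) x :=
        hd1.neg.add (hd2.const_mul c)
      rw [hd.deriv]
      have key : c * x ^ (q - 1) < (x - α) ^ (q - 1) := by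
        have h1 : c * x ^ (q - 1) = ((1 - α) * x) ^ (q - 1) := by
          rw [hc, ← Real.mul_rpow h1α.le hx1.le]
        rw [h1]
        apply Real.rpow_lt_rpow (by positivity) _ hq1
        nlinarith
      nlinarith
  -- value at 1
  have hpow : (1 - α) ^ q = c * (1 - α) := by
    rw [show q = (q - 1) + 1 by ring, Real.rpow_add h1α, Real.rpow_one, hc]
  have hf1 : f 1 = α * c := by
    simp only [hf, Real.one_rpow, mul_one]
    rw [show (1:ℝ) - α = 1 - α from rfl, hpow]; ring
  -- choose b with f b ≤ 0
  set d : ℝ := c ^ q⁻¹ with hd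
  have hd0 : 0 < d := Real.rpow_pos_of_pos hc0 _
  have hd1 : d < 1 := by
    rw [hd, hc, ← Real.rpow_mul h1α.le]
    exact Real.rpow_lt_one h1α.le (by linarith) (by positivity)
  have hdq : d ^ q = c := Real.rpow_inv_rpow hc0.le hq0.ne'
  set b : ℝ := max 1 (α / (1 - d)) with hb
  have hb1 : (1:ℝ) ≤ b := le_max_left _ _
  have hbα : α ≤ b * (1 - d) := by
    rw [← div_le_iff₀ (by linarith)]
    exact le_max_right _ _
  have hfb : f b ≤ 0 := by
    have hdb : d * b ≤ b - α := by nlinarith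
    have : c * b ^ q = (d * b) ^ q := by
      rw [Real.mul_rpow hd0.le (by linarith), hdq]
    simp only [hf]
    rw [this]
    have : (d * b) ^ q ≤ (b - α) ^ q :=
      Real.rpow_le_rpow (by positivity) hdb hq0.le
    linarith
  -- existence by IVT
  have hmem : τ * α * c ∈ Icc (f b) (f 1) := by
    constructor
    · linarith [mul_pos (mul_pos hτ0 hα0) hc0]
    · rw [hf1]; nlinarith [mul_pos hα0 hc0]
  have hsub := intermediate_value_Icc' hb1 (fun x hx =>
    (hcont x hx.1).mono Icc_subset_Ici_self)
  obtain ⟨z, hz, hfz⟩ := hsub hmem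
  refine ⟨z, ⟨hz.1, hfz⟩, ?_⟩
  intro y hy
  exact hanti.injOn hy.1 hz.1 (hy.2.trans hfz.symm)
end

section
/- Let q > 1 and τ ∈ (0,1] be fixed, and for each α ∈ (0,1) let z(α, τ) ∈ [1, ∞) denote the unique solution of -(z-α)^q + (1-α)^{q-1} z^q = τ α (1-α)^{q-1}. Then lim_{α → 0⁺} z(α, τ) = ω_q(τ), where ω_q : (0,1] → [1, q/(q-1)) is the inverse of H_q(z) = -(q-1)z^q + q z^{q-1} restricted to [1, ∞). -/
/-!
Write `defect(α, x) = -(x-α)^q + (1-α)^{q-1} x^q - τα(1-α)^{q-1}`, so that `z α` is the zero of the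
strictly decreasing function `defect(α, ·)` on `[1, ∞)`. Since `defect(0, ·) ≡ 0` and
`∂_α defect(0, w) = H_q(w) - τ = H_q(w) - H_q(ω)`, which has the sign of `ω - w` because `H_q` is
strictly decreasing on `[1, ∞)`, for every fixed `w ≥ 1`, `w ≠ ω`, and all small `α > 0` the
value `defect(α, w)` has the sign of `ω - w`. Monotonicity of `defect(α, ·)` turns this into
`z α > w` for `w < ω` and `z α < w` for `w > ω`.
-/

open Set Filter

lemma StrictAntiOn.sign_sub {α β : Type*} [AddCommGroup α] [LinearOrder α] [IsOrderedAddMonoid α]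
    [AddCommGroup β] [LinearOrder β] [IsOrderedAddMonoid β] {f : α → β} {s : Set α}
    (hf : StrictAntiOn f s) {x y : α} (hx : x ∈ s) (hy : y ∈ s) :
    SignType.sign (f x - f y) = SignType.sign (y - x) := by
  rcases lt_trichotomy x y with hxy | rfl | hxy
  · rw [sign_pos (sub_pos.2 (hf hx hy hxy)), sign_pos (sub_pos.2 hxy)]
  · simp
  · rw [sign_neg (sub_neg.2 (hf hy hx hxy)), sign_neg (sub_neg.2 hxy)]

lemma eventually_nhdsGT_sign_eq_sign_deriv {f : ℝ → ℝ} {a : ℝ} (hf : deriv f a ≠ 0)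
    (ha : f a = 0) :
    ∀ᶠ x in nhdsWithin a (Ioi a), SignType.sign (f x) = SignType.sign (deriv f a) := by
  rcases hf.lt_or_gt with hneg | hpos
  · filter_upwards [nhdsWithin_le_nhds (eventually_nhdsWithin_sign_eq_of_deriv_neg hneg ha),
      self_mem_nhdsWithin] with x hsign (hx : a < x)
    rw [hsign, sign_neg (sub_neg.2 hx), sign_neg hneg]
  · filter_upwards [nhdsWithin_le_nhds (eventually_nhdsWithin_sign_eq_of_deriv_pos hpos ha),
      self_mem_nhdsWithin] with x hsign (hx : a < x)
    rw [hsign, sign_pos (sub_pos.2 hx), sign_pos hpos]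

namespace LimitZ

noncomputable def H (q x : ℝ) : ℝ := -(q - 1) * x ^ q + q * x ^ (q - 1)

noncomputable def defect (q τ α x : ℝ) : ℝ :=
  -(x - α) ^ q + (1 - α) ^ (q - 1) * x ^ q - τ * α * (1 - α) ^ (q - 1)

variable {q τ α x : ℝ}

lemma strictAntiOn_H (hq : 1 < q) : StrictAntiOn (H q) (Ici 1) := by
  have hcont : ContinuousOn (H q) (Ici 1) := by
    refine ContinuousOn.add ?_ ?_ <;>
      exact continuousOn_const.mul (continuousOn_id.rpow_const fun x hx => Or.inr (by linarith))
  refine strictAntiOn_of_deriv_neg (convex_Ici 1) hcont fun x hx => ?_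
  rw [interior_Ici] at hx
  have hx1 : (1 : ℝ) < x := hx
  have hderiv : HasDerivAt (H q)
      (-(q - 1) * (1 * q * x ^ (q - 1)) + q * (1 * (q - 1) * x ^ (q - 1 - 1))) x :=
    (((hasDerivAt_id x).rpow_const (Or.inr hq.le)).const_mul _).add
      (((hasDerivAt_id x).rpow_const (Or.inl (by linarith : (0 : ℝ) < x).ne')).const_mul _)
  have hpow : x ^ (q - 1 - 1) < x ^ (q - 1) := Real.rpow_lt_rpow_of_exponent_lt hx1 (by linarith)
  rw [hderiv.deriv]
  nlinarith [mul_lt_mul_of_pos_left hpow (by nlinarith : (0 : ℝ) < q * (q - 1))]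

lemma strictAntiOn_defect (hq : 1 < q) (hα : α ∈ Ioo 0 1) :
    StrictAntiOn (defect q τ α) (Ici 1) := by
  obtain ⟨hα0, hα1⟩ := hα
  have hcont : ContinuousOn (defect q τ α) (Ici 1) := by
    refine ((ContinuousOn.neg ?_).add ?_).sub continuousOn_const
    · exact (continuousOn_id.sub continuousOn_const).rpow_const fun x hx => Or.inr (by linarith)
    · exact continuousOn_const.mul (continuousOn_id.rpow_const fun x hx => Or.inr (by linarith))
  refine strictAntiOn_of_deriv_neg (convex_Ici 1) hcont fun x hx => ?_
  rw [interior_Ici] at hx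
  have hx1 : (1 : ℝ) < x := hx
  have hderiv : HasDerivAt (defect q τ α)
      (-(1 * q * (x - α) ^ (q - 1)) + (1 - α) ^ (q - 1) * (1 * q * x ^ (q - 1))) x :=
    ((((hasDerivAt_id x).sub_const α).rpow_const (Or.inr hq.le)).neg.add
      (((hasDerivAt_id x).rpow_const (Or.inr hq.le)).const_mul _)).sub_const _
  -- `(1 - α) x < x - α` because `x > 1`
  have hpow : (1 - α) ^ (q - 1) * x ^ (q - 1) < (x - α) ^ (q - 1) := by
    rw [← Real.mul_rpow (by linarith) (by linarith)]
    exact Real.rpow_lt_rpow (by nlinarith) (by nlinarith) (by linarith)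
  rw [hderiv.deriv]
  nlinarith [mul_lt_mul_of_pos_left hpow (by linarith : (0 : ℝ) < q)]

lemma defect_zero_left (q τ x : ℝ) : defect q τ 0 x = 0 := by
  simp [defect]

lemma hasDerivAt_defect_zero_left (hq : 1 < q) :
    HasDerivAt (fun α => defect q τ α x) (H q x - τ) 0 := by
  have hpow : HasDerivAt (fun α : ℝ => (1 - α) ^ (q - 1))
      ((0 - 1) * (q - 1) * (1 - 0) ^ (q - 1 - 1)) 0 :=
    ((hasDerivAt_const 0 1).sub (hasDerivAt_id 0)).rpow_const (Or.inl (by norm_num))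
  have h : HasDerivAt (fun α => defect q τ α x) _ 0 :=
    ((((hasDerivAt_const 0 x).sub (hasDerivAt_id 0)).rpow_const (Or.inr hq.le)).neg.add
      (hpow.mul_const (x ^ q))).sub (((hasDerivAt_id 0).const_mul τ).mul hpow)
  convert h using 1
  simp only [H, Pi.sub_apply, id, sub_zero, mul_zero, zero_mul, Real.one_rpow]
  ring

lemma eventually_sign_sub_eq {z : ℝ → ℝ} (hq : 1 < q)
    (hz : ∀ α ∈ Ioo (0 : ℝ) 1, z α ∈ Ici (1 : ℝ) ∧ defect q τ α (z α) = 0)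
    {ω : ℝ} (hω1 : 1 ≤ ω) (hω : H q ω = τ) {w : ℝ} (hw1 : 1 ≤ w) (hwω : w ≠ ω) :
    ∀ᶠ α in nhdsWithin 0 (Ioi 0), SignType.sign (z α - w) = SignType.sign (ω - w) := by
  have hderiv : deriv (fun α => defect q τ α w) 0 = H q w - H q ω := by
    rw [(hasDerivAt_defect_zero_left hq).deriv, hω]
  have hsign : SignType.sign (H q w - H q ω) = SignType.sign (ω - w) :=
    (strictAntiOn_H hq).sign_sub hw1 hω1
  have hne : H q w - H q ω ≠ 0 := by
    rw [← sign_ne_zero, hsign, sign_ne_zero, sub_ne_zero]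
    exact hwω.symm
  filter_upwards [eventually_nhdsGT_sign_eq_sign_deriv (hderiv ▸ hne) (defect_zero_left q τ w),
    Ioo_mem_nhdsGT_of_mem ⟨le_rfl, one_pos⟩] with α hα hαIoo
  obtain ⟨hzα1, hzα⟩ := hz α hαIoo
  rw [← (strictAntiOn_defect hq hαIoo).sign_sub hw1 hzα1, hzα, sub_zero, ← hsign, ← hderiv]
  exact hα

end LimitZ

open LimitZ in
theorem limit_z_eq_omega_general (q τ : ℝ) (hq : 1 < q)
    (z : ℝ → ℝ)
    (hz : ∀ α ∈ Ioo (0 : ℝ) 1, z α ∈ Ici (1 : ℝ) ∧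
      -(z α - α) ^ q + (1 - α) ^ (q - 1) * (z α) ^ q = τ * α * (1 - α) ^ (q - 1))
    (ω : ℝ) (hω1 : 1 ≤ ω) (hω : -(q - 1) * ω ^ q + q * ω ^ (q - 1) = τ) :
    Tendsto z (nhdsWithin 0 (Ioi 0)) (nhds ω) := by
  have hdefect : ∀ α ∈ Ioo (0 : ℝ) 1, z α ∈ Ici (1 : ℝ) ∧ defect q τ α (z α) = 0 :=
    fun α hα => ⟨(hz α hα).1, sub_eq_zero.2 (hz α hα).2⟩
  refine tendsto_order.2 ⟨fun a ha => ?_, fun b hb => ?_⟩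
  · rcases lt_or_ge a 1 with ha1 | ha1
    · filter_upwards [Ioo_mem_nhdsGT_of_mem ⟨le_rfl, one_pos⟩] with α hα
      exact ha1.trans_le (hz α hα).1
    · filter_upwards [eventually_sign_sub_eq hq hdefect hω1 hω ha1 ha.ne] with α hα
      rw [sign_pos (sub_pos.2 ha), sign_eq_one_iff, sub_pos] at hα
      exact hα
  · filter_upwards [eventually_sign_sub_eq hq hdefect hω1 hω (hω1.trans hb.le) hb.ne'] with α hα
    rw [sign_neg (sub_neg.2 hb), sign_eq_neg_one_iff, sub_neg] at hα
    exact hα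

/-- Let `q > 1` and `τ ∈ (0,1]`. For each `α ∈ (0,1)` let `z α ∈ [1,∞)` be the (unique)
solution of `-(z-α)^q + (1-α)^{q-1} z^q = τ α (1-α)^{q-1}`, and let `ω` be the unique
`z ≥ 1` with `-(q-1)z^q + q z^{q-1} = τ` (i.e. `ω = ω_q(τ)`). Then `z(α,τ) → ω` as
`α → 0⁺`. -/
theorem limit_z_eq_omega (q τ : ℝ) (hq : 1 < q) (hτ0 : 0 < τ) (hτ1 : τ ≤ 1)
    (z : ℝ → ℝ)
    (hz : ∀ α ∈ Ioo (0 : ℝ) 1, z α ∈ Ici (1 : ℝ) ∧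
      -(z α - α) ^ q + (1 - α) ^ (q - 1) * (z α) ^ q = τ * α * (1 - α) ^ (q - 1))
    (ω : ℝ) (hω1 : 1 ≤ ω) (hω : -(q - 1) * ω ^ q + q * ω ^ (q - 1) = τ) :
    Tendsto z (nhdsWithin 0 (Ioi 0)) (nhds ω) :=
  limit_z_eq_omega_general q τ hq z hz ω hω1 hω
end

section
/- Let (X, μ) be a non-atomic probability space with a tree structure 𝒯. For every I ∈ 𝒯 and every a with 0 < a < 1, there exists a subfamily ℱ(I) ⊆ 𝒯 consisting of pairwise almost disjoint subsets of I such that μ(⋃_{J ∈ ℱ(I)} J) = Σ_{J ∈ ℱ(I)} μ(J) = (1-a) μ(I). -/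
/-!
Descend greedily through the tree starting from `I`, keeping track of the measure `δₙ` still
to be collected. At a node `Jₙ` with `δₙ < μ Jₙ`, the children's measures sum to `μ Jₙ`, so
one can take finitely many children of total measure `sₙ ≤ δₙ` and a further child `Jₙ₊₁`
with `δₙ - sₙ < μ Jₙ₊₁`; collect the former and continue in `Jₙ₊₁` with `δₙ₊₁ = δₙ - sₙ`.
All collected sets are almost disjoint, since those collected later lie inside a sibling of
those collected earlier, and their total measure is `δ₀ - lim δₙ = δ₀`, because
`δₙ < μ Jₙ → 0` by the smallness of the levels.
-/

open MeasureTheory Set Filter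

/-- A tree structure on a probability space `(X, μ)` in the sense of Definition 2.1:
`𝒯 = ⋃ₘ 𝒯₍ₘ₎` with `𝒯₍₀₎ = {X}`, each `I ∈ 𝒯` split into at least two pairwise almost
disjoint children covering `I`, all elements measurable of positive measure, and
`sup_{I ∈ 𝒯₍ₘ₎} μ(I) → 0`. -/
structure TreeStruct {X : Type*} [MeasurableSpace X] (μ : Measure X) where
  level : ℕ → Set (Set X)
  child : Set X → Set (Set X)
  level_zero : level 0 = {Set.univ}
  level_succ : ∀ m, level (m + 1) = ⋃ I ∈ level m, child I
  mem_meas : ∀ m, ∀ I ∈ level m, MeasurableSet I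
  mem_pos : ∀ m, ∀ I ∈ level m, 0 < μ I
  child_countable : ∀ I, (child I).Countable
  child_nontrivial : ∀ m, ∀ I ∈ level m, ∃ J ∈ child I, ∃ K ∈ child I, J ≠ K
  child_subset : ∀ m, ∀ I ∈ level m, ∀ J ∈ child I, J ⊆ I
  child_almost_disjoint :
    ∀ m, ∀ I ∈ level m, ∀ J ∈ child I, ∀ K ∈ child I, J ≠ K → μ (J ∩ K) = 0
  child_cover : ∀ m, ∀ I ∈ level m, I = ⋃₀ child I
  level_small : Tendsto (fun m => ⨆ I ∈ level m, μ I) atTop (nhds 0)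

/-- Membership in the tree: `I ∈ 𝒯` iff it belongs to some level. -/
def TreeStruct.Mem {X : Type*} [MeasurableSpace X] {μ : Measure X}
    (T : TreeStruct μ) (I : Set X) : Prop := ∃ m, I ∈ T.level m

/-- The maximal operator associated to the tree `𝒯`:
`ℳ_𝒯 φ(x) = sup { (1/μ(I)) ∫_I |φ| dμ : x ∈ I ∈ 𝒯 }`. -/
noncomputable def maxOp {X : Type*} [MeasurableSpace X] {μ : Measure X}
    (T : TreeStruct μ) (φ : X → ℝ) (x : X) : ℝ :=
  sSup ((fun I => (∫ y in I, |φ y| ∂μ) / (μ I).toReal) '' {I | T.Mem I ∧ x ∈ I})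

open scoped ENNReal Topology

theorem exists_seq_of_forall_exists_succ {α : Type*} {p : ℕ → α → Prop} {r : α → α → Prop}
    {a : α} (ha : p 0 a) (h : ∀ n a, p n a → ∃ b, p (n + 1) b ∧ r a b) :
    ∃ f : ℕ → α, f 0 = a ∧ ∀ n, p n (f n) ∧ r (f n) (f (n + 1)) := by
  choose g hg using h
  let f : (n : ℕ) → {b // p n b} := fun n =>
    Nat.rec (motive := fun n => {b // p n b}) ⟨a, ha⟩ (fun n b => ⟨g n b b.2, (hg n b b.2).1⟩) n
  exact ⟨fun n => (f n).1, rfl, fun n => ⟨(f n).2, (hg n _ (f n).2).2⟩⟩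

theorem tsum_eq_of_add_eq_of_tendsto_zero {M : Type*} [AddCommMonoid M] [TopologicalSpace M]
    [ContinuousAdd M] [T2Space M] {a δ : ℕ → M} (ha : Summable a)
    (h : ∀ n, a n + δ (n + 1) = δ n) (hδ : Tendsto δ atTop (𝓝 0)) : ∑' n, a n = δ 0 := by
  have hpartial : ∀ N, ∑ n ∈ Finset.range N, a n + δ N = δ 0 := by
    intro N
    induction N with
    | zero => simp
    | succ N ih => rw [Finset.sum_range_succ, add_assoc, h, ih]
  have hlim := ha.hasSum.tendsto_sum_nat.add hδ
  simp_rw [hpartial, add_zero] at hlim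
  exact tendsto_nhds_unique hlim tendsto_const_nhds

theorem Finset.exists_subset_sum_le_lt_add {ι M : Type*} [AddCommMonoid M] [LinearOrder M]
    [CanonicallyOrderedAdd M] (f : ι → M) {s : Finset ι} {δ : M} (h : δ < ∑ i ∈ s, f i) :
    ∃ t ⊆ s, ∃ k ∈ s, k ∉ t ∧ ∑ i ∈ t, f i ≤ δ ∧ δ < f k + ∑ i ∈ t, f i := by
  classical
  induction s using Finset.induction_on with
  | empty => simp at h
  | insert a s ha ih =>
    rw [Finset.sum_insert ha] at h
    by_cases hs : δ < ∑ i ∈ s, f i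
    · obtain ⟨t, hts, k, hk, hkt, hle, hlt⟩ := ih hs
      exact ⟨t, hts.trans (Finset.subset_insert a s), k, Finset.mem_insert_of_mem hk, hkt, hle, hlt⟩
    · exact ⟨s, Finset.subset_insert a s, a, Finset.mem_insert_self a s, ha, not_lt.mp hs, h⟩

theorem ENNReal.exists_finset_sum_le_lt_add_of_lt_tsum {α : Type*} (f : α → ℝ≥0∞) {s : Set α}
    {δ : ℝ≥0∞} (h : δ < ∑' x : s, f x) :
    ∃ t : Finset α, ↑t ⊆ s ∧ ∃ k ∈ s, k ∉ t ∧ ∑ i ∈ t, f i ≤ δ ∧ δ < f k + ∑ i ∈ t, f i := by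
  obtain ⟨u, hu⟩ := lt_iSup_iff.mp (ENNReal.tsum_eq_iSup_sum (f := fun x : s => f x) ▸ h)
  have hu' : δ < ∑ x ∈ u.map (Function.Embedding.subtype _), f x := by rwa [Finset.sum_map]
  have hus : ∀ x ∈ u.map (Function.Embedding.subtype _), x ∈ s := fun x hx => by
    obtain ⟨y, -, rfl⟩ := Finset.mem_map.1 hx
    exact y.2
  obtain ⟨t, htu, k, hk, hkt, hle, hlt⟩ := Finset.exists_subset_sum_le_lt_add f hu'
  exact ⟨t, fun x hx => hus x (htu hx), k, hus k hk, hkt, hle, hlt⟩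

namespace TreeStruct

variable {X : Type*} [MeasurableSpace X] {μ : Measure X} (T : TreeStruct μ)

theorem mem_level_succ {m : ℕ} {J K : Set X} (hJ : J ∈ T.level m) (hK : K ∈ T.child J) :
    K ∈ T.level (m + 1) := by
  rw [T.level_succ]
  exact mem_biUnion hJ hK

theorem tsum_measure_child {m : ℕ} {J : Set X} (hJ : J ∈ T.level m) :
    ∑' K : T.child J, μ K = μ J := by
  rw [← measure_sUnion₀ (T.child_countable J), ← T.child_cover m J hJ]
  · exact fun A hA B hB hAB => T.child_almost_disjoint m J hJ A hA B hB hAB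
  · exact fun K hK => (T.mem_meas _ K (T.mem_level_succ hJ hK)).nullMeasurableSet

theorem tendsto_measure_of_mem_level {ι : Type*} {l : Filter ι} {k : ι → ℕ} {J : ι → Set X}
    (hk : Tendsto k l atTop) (hJ : ∀ i, J i ∈ T.level (k i)) :
    Tendsto (fun i => μ (J i)) l (𝓝 0) :=
  tendsto_of_tendsto_of_tendsto_of_le_of_le tendsto_const_nhds (T.level_small.comp hk)
    (fun _ => zero_le)
    (fun i => le_iSup₂ (f := fun K (_ : K ∈ T.level (k i)) => μ K) (J i) (hJ i))

theorem exists_pick_of_lt_measure {m : ℕ} {J : Set X} {δ : ℝ≥0∞} (hJ : J ∈ T.level m)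
    (hδ : δ < μ J) :
    ∃ S : Finset (Set X), ↑S ⊆ T.child J ∧ ∃ K ∈ T.child J, K ∉ S ∧
      ∑ A ∈ S, μ A ≤ δ ∧ δ - ∑ A ∈ S, μ A < μ K := by
  obtain ⟨S, hS, K, hK, hKS, hle, hlt⟩ :=
    ENNReal.exists_finset_sum_le_lt_add_of_lt_tsum μ (hδ.trans_eq (T.tsum_measure_child hJ).symm)
  exact ⟨S, hS, K, hK, hKS, hle, ENNReal.sub_lt_of_lt_add hle hlt⟩

structure Descent (m : ℕ) (I : Set X) (t : ℝ≥0∞) where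
  node : ℕ → Set X
  rest : ℕ → ℝ≥0∞
  pick : ℕ → Finset (Set X)
  node_zero : node 0 = I
  rest_zero : rest 0 = t
  node_mem : ∀ n, node n ∈ T.level (m + n)
  rest_lt : ∀ n, rest n < μ (node n)
  pick_subset : ∀ n, ↑(pick n) ⊆ T.child (node n)
  node_succ_mem : ∀ n, node (n + 1) ∈ T.child (node n)
  node_succ_notMem : ∀ n, node (n + 1) ∉ pick n
  sum_add_rest : ∀ n, ∑ A ∈ pick n, μ A + rest (n + 1) = rest n

theorem nonempty_descent {m : ℕ} {I : Set X} {t : ℝ≥0∞} (hI : I ∈ T.level m) (ht : t < μ I) :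
    Nonempty (T.Descent m I t) := by
  obtain ⟨f, hf0, hf⟩ := exists_seq_of_forall_exists_succ
    (p := fun n (q : Set X × ℝ≥0∞) => q.1 ∈ T.level (m + n) ∧ q.2 < μ q.1)
    (r := fun q q' => ∃ S : Finset (Set X), ↑S ⊆ T.child q.1 ∧ q'.1 ∈ T.child q.1 ∧
      q'.1 ∉ S ∧ ∑ A ∈ S, μ A + q'.2 = q.2)
    (a := (I, t)) ⟨hI, ht⟩ (by
      rintro n ⟨J, δ⟩ ⟨hJ, hδ⟩
      obtain ⟨S, hS, K, hK, hKS, hle, hlt⟩ := T.exists_pick_of_lt_measure hJ hδ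
      exact ⟨(K, δ - ∑ A ∈ S, μ A), ⟨T.mem_level_succ hJ hK, hlt⟩, S, hS, hK, hKS,
        add_tsub_cancel_of_le hle⟩)
  choose S hS using fun n => (hf n).2
  exact ⟨{ node := fun n => (f n).1
           rest := fun n => (f n).2
           pick := S
           node_zero := by rw [hf0]
           rest_zero := by rw [hf0]
           node_mem := fun n => (hf n).1.1
           rest_lt := fun n => (hf n).1.2
           pick_subset := fun n => (hS n).1
           node_succ_mem := fun n => (hS n).2.1
           node_succ_notMem := fun n => (hS n).2.2.1
           sum_add_rest := fun n => (hS n).2.2.2 }⟩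

namespace Descent

variable {T} {m : ℕ} {I : Set X} {t : ℝ≥0∞} (D : T.Descent m I t) {n k : ℕ} {A B : Set X}

theorem antitone_node : Antitone D.node :=
  antitone_nat_of_succ_le fun n => T.child_subset _ _ (D.node_mem n) _ (D.node_succ_mem n)

theorem subset_node (hA : A ∈ D.pick n) : A ⊆ D.node n :=
  T.child_subset _ _ (D.node_mem n) A (D.pick_subset n hA)

theorem mem_level (hA : A ∈ D.pick n) : A ∈ T.level (m + n + 1) :=
  T.mem_level_succ (D.node_mem n) (D.pick_subset n hA)

theorem measure_inter_eq_zero_of_lt (hnk : n < k) (hA : A ∈ D.pick n) (hB : B ∈ D.pick k) :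
    μ (A ∩ B) = 0 := by
  have hB_sub : B ⊆ D.node (n + 1) := (D.subset_node hB).trans (D.antitone_node hnk)
  have hsiblings : μ (A ∩ D.node (n + 1)) = 0 :=
    T.child_almost_disjoint _ _ (D.node_mem n) A (D.pick_subset n hA) _ (D.node_succ_mem n)
      fun h => D.node_succ_notMem n (h ▸ hA)
  exact measure_mono_null (inter_subset_inter_right A hB_sub) hsiblings

theorem notMem_pick_of_lt (hnk : n < k) (hA : A ∈ D.pick n) : A ∉ D.pick k := fun hAk =>
  (T.mem_pos _ A (D.mem_level hA)).ne' (by simpa using D.measure_inter_eq_zero_of_lt hnk hA hAk)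

theorem pairwiseDisjoint_pick : univ.PairwiseDisjoint fun n => (D.pick n : Set (Set X)) := by
  intro n _ k _ hnk
  rw [Function.onFun, Set.disjoint_left]
  intro A hAn hAk
  rcases hnk.lt_or_gt with h | h
  · exact D.notMem_pick_of_lt h hAn hAk
  · exact D.notMem_pick_of_lt h hAk hAn

theorem tendsto_rest : Tendsto D.rest atTop (𝓝 0) :=
  tendsto_of_tendsto_of_tendsto_of_le_of_le tendsto_const_nhds
    (T.tendsto_measure_of_mem_level (tendsto_atTop_mono (Nat.le_add_left · m) tendsto_id) D.node_mem)
    (fun _ => zero_le) (fun n => (D.rest_lt n).le)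

def family : Set (Set X) := ⋃ n, (D.pick n : Set (Set X))

theorem mem_family : A ∈ D.family ↔ ∃ n, A ∈ D.pick n := by simp [family]

theorem countable_family : D.family.Countable :=
  countable_iUnion fun n => (D.pick n).countable_toSet

theorem mem_of_mem_family (hA : A ∈ D.family) : T.Mem A :=
  let ⟨_, hAn⟩ := D.mem_family.1 hA
  ⟨_, D.mem_level hAn⟩

theorem subset_of_mem_family (hA : A ∈ D.family) : A ⊆ I := by
  obtain ⟨n, hAn⟩ := D.mem_family.1 hA
  exact D.node_zero ▸ (D.subset_node hAn).trans (D.antitone_node (Nat.zero_le n))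

theorem pairwise_aedisjoint_family : D.family.Pairwise (AEDisjoint μ) := by
  intro A hA B hB hAB
  obtain ⟨n, hAn⟩ := D.mem_family.1 hA
  obtain ⟨k, hBk⟩ := D.mem_family.1 hB
  rcases lt_trichotomy n k with h | rfl | h
  · exact D.measure_inter_eq_zero_of_lt h hAn hBk
  · exact T.child_almost_disjoint _ _ (D.node_mem n) A (D.pick_subset n hAn) B
      (D.pick_subset n hBk) hAB
  · exact AEDisjoint.symm (D.measure_inter_eq_zero_of_lt h hBk hAn)

theorem tsum_measure_family : ∑' A : D.family, μ A = t := by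
  rw [family, ENNReal.tsum_biUnion D.pairwiseDisjoint_pick]
  simp_rw [Finset.tsum_subtype']
  exact (tsum_eq_of_add_eq_of_tendsto_zero ENNReal.summable D.sum_add_rest D.tendsto_rest).trans
    D.rest_zero

theorem measure_sUnion_family : μ (⋃₀ D.family) = t := by
  rw [measure_sUnion₀ D.countable_family D.pairwise_aedisjoint_family, D.tsum_measure_family]
  intro A hA
  obtain ⟨n, hAn⟩ := D.mem_family.1 hA
  exact (T.mem_meas _ A (D.mem_level hAn)).nullMeasurableSet

end Descent

end TreeStruct

theorem exists_subfamily_general {X : Type*} [MeasurableSpace X]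
    (μ : Measure X) [IsProbabilityMeasure μ] (T : TreeStruct μ)
    (I : Set X) (hI : T.Mem I) (a : ℝ) (ha0 : 0 < a) :
    ∃ F : Set (Set X), F.Countable ∧
      (∀ J ∈ F, T.Mem J) ∧
      (∀ J ∈ F, J ⊆ I) ∧
      (∀ J ∈ F, ∀ K ∈ F, J ≠ K → μ (J ∩ K) = 0) ∧
      μ (⋃₀ F) = ENNReal.ofReal (1 - a) * μ I ∧
      ∑' J : F, μ (J : Set X) = ENNReal.ofReal (1 - a) * μ I := by
  obtain ⟨m, hIm⟩ := hI
  have ht : ENNReal.ofReal (1 - a) * μ I < μ I :=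
    calc ENNReal.ofReal (1 - a) * μ I < 1 * μ I :=
          (ENNReal.mul_lt_mul_iff_left (T.mem_pos m I hIm).ne' (measure_ne_top μ I)).mpr
            (ENNReal.ofReal_lt_one.mpr (by linarith))
      _ = μ I := one_mul _
  obtain ⟨D⟩ := T.nonempty_descent hIm ht
  exact ⟨D.family, D.countable_family, fun _ => D.mem_of_mem_family,
    fun _ => D.subset_of_mem_family, D.pairwise_aedisjoint_family, D.measure_sUnion_family,
    D.tsum_measure_family⟩

/-- Lemma 2.1: for every `I ∈ 𝒯` and every `a ∈ (0,1)` there is a subfamily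
`ℱ(I) ⊆ 𝒯` of pairwise almost disjoint subsets of `I` with
`μ(⋃ ℱ(I)) = Σ_{J ∈ ℱ(I)} μ(J) = (1-a) μ(I)`. -/
theorem exists_subfamily {X : Type*} [MeasurableSpace X]
    (μ : Measure X) [IsProbabilityMeasure μ] [NullSingletonClass μ] (T : TreeStruct μ)
    (I : Set X) (hI : T.Mem I) (a : ℝ) (ha0 : 0 < a) (ha1 : a < 1) :
    ∃ F : Set (Set X), F.Countable ∧
      (∀ J ∈ F, T.Mem J) ∧
      (∀ J ∈ F, J ⊆ I) ∧
      (∀ J ∈ F, ∀ K ∈ F, J ≠ K → μ (J ∩ K) = 0) ∧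
      μ (⋃₀ F) = ENNReal.ofReal (1 - a) * μ I ∧
      ∑' J : F, μ (J : Set X) = ENNReal.ofReal (1 - a) * μ I :=
  exists_subfamily_general μ T I hI a ha0
end

section
/- Let (X, μ) be a probability space with tree structure 𝒯, let 1 < q < p, and let φ ≥ 0 be in L^p(X, μ) with ∫_X φ dμ = f and ∫_X φ^q dμ = A. Then ∫_X (ℳ_𝒯 φ)^p dμ ≤ f^p − (p/(p−q)) f^{p−q} A + (p/(p−q)) ∫_X (ℳ_𝒯 φ)^{p−q} φ^q dμ. -/
/-!
By the layer-cake formula, `∫ (ℳφ)^p = ∫₀^∞ p t^{p-1} μ{ℳφ > t} dt`. For `t ≤ f` we only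
use `μ{ℳφ > t} ≤ 1`, which contributes `f^p`. For `t > f` the weak-type estimate
`t^q μ{ℳφ > t} ≤ ∫_{ℳφ > t} φ^q` trades `t^{p-1}` for `t^{p-q-1}` against the measure
`φ^q dμ`, and reading the layer-cake formula backwards for that measure gives
`(p/(p-q)) ∫ ((ℳφ)^{p-q} - f^{p-q}) φ^q dμ`, since `ℳφ ≥ f` almost everywhere.

The weak-type estimate is a stopping-time argument: the maximal elements of `𝒯` on which the
average of `|φ|` exceeds `t` are pairwise almost disjoint and cover `{ℳφ > t}`, and on each of
them Jensen's inequality gives `t^q μ(J) ≤ ∫_J |φ|^q`.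
-/

open MeasureTheory Set Filter

open scoped ENNReal

namespace TreeStruct

variable {X : Type*} [MeasurableSpace X] {μ : Measure X} (T : TreeStruct μ)

theorem univ_mem : T.Mem univ := ⟨0, by rw [T.level_zero]; rfl⟩

theorem countable_setOf_mem : {I | T.Mem I}.Countable := by
  have hlevel : ∀ m, (T.level m).Countable := by
    intro m
    induction m with
    | zero => rw [T.level_zero]; exact countable_singleton _
    | succ m ih => rw [T.level_succ m]; exact ih.biUnion fun I _ => T.child_countable I
  have hunion : {I | T.Mem I} = ⋃ m, T.level m := by ext; simp [TreeStruct.Mem]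
  exact hunion ▸ countable_iUnion hlevel

def IsPath (c : ℕ → Set X) (m : ℕ) : Prop :=
  c 0 = univ ∧ ∀ j < m, c (j + 1) ∈ T.child (c j)

variable {T} {c c' : ℕ → Set X} {m m' : ℕ}

theorem IsPath.mem_level (hc : T.IsPath c m) {j : ℕ} (hj : j ≤ m) : c j ∈ T.level j := by
  induction j with
  | zero => rw [hc.1, T.level_zero]; rfl
  | succ k ih => rw [T.level_succ k]; exact mem_biUnion (ih (by omega)) (hc.2 k (by omega))

theorem IsPath.succ_subset (hc : T.IsPath c m) {j : ℕ} (hj : j < m) : c (j + 1) ⊆ c j :=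
  T.child_subset j _ (hc.mem_level hj.le) _ (hc.2 j hj)

theorem IsPath.subset (hc : T.IsPath c m) {i j : ℕ} (hij : i ≤ j) (hjm : j ≤ m) :
    c j ⊆ c i := by
  induction j, hij using Nat.le_induction with
  | base => exact subset_rfl
  | succ k _ ih => exact (hc.succ_subset hjm).trans (ih (by omega))

theorem exists_isPath {J : Set X} (hJ : J ∈ T.level m) : ∃ c, T.IsPath c m ∧ c m = J := by
  induction m generalizing J with
  | zero =>
    rw [T.level_zero] at hJ
    exact ⟨fun _ => univ, ⟨rfl, fun j hj => absurd hj j.not_lt_zero⟩, hJ.symm⟩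
  | succ m ih =>
    rw [T.level_succ m, mem_iUnion₂] at hJ
    obtain ⟨I, hI, hJI⟩ := hJ
    obtain ⟨c, hc, rfl⟩ := ih hI
    refine ⟨fun j => if j ≤ m then c j else J, ⟨by simp [hc.1], fun j hj => ?_⟩, by simp⟩
    rcases (Nat.lt_succ_iff.mp hj).lt_or_eq with hjm | rfl
    · simpa [Nat.succ_le_of_lt hjm, hjm.le] using hc.2 j hjm
    · simpa using hJI

theorem IsPath.eq_or_measure_inter_eq_zero (hc : T.IsPath c m) (hc' : T.IsPath c' m')
    {j : ℕ} (hjm : j ≤ m) (hjm' : j ≤ m') : c j = c' j ∨ μ (c j ∩ c' j) = 0 := by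
  induction j with
  | zero => exact Or.inl (hc.1.trans hc'.1.symm)
  | succ k ih =>
    rcases ih (by omega) (by omega) with heq | hnull
    · by_cases hne : c (k + 1) = c' (k + 1)
      · exact Or.inl hne
      · refine Or.inr (T.child_almost_disjoint k (c k) (hc.mem_level (by omega)) _
          (hc.2 k hjm) _ ?_ hne)
        rw [heq]; exact hc'.2 k hjm'
    · exact Or.inr (measure_mono_null
        (inter_subset_inter (hc.succ_subset hjm) (hc'.succ_subset hjm')) hnull)

theorem IsPath.measure_inter_eq_zero_or_eq (hc : T.IsPath c m) (hc' : T.IsPath c' m')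
    (hle : m ≤ m') (hne : c m ≠ c' m') : μ (c m ∩ c' m') = 0 ∨ m < m' ∧ c m = c' m := by
  rcases hc.eq_or_measure_inter_eq_zero hc' le_rfl hle with heq | hnull
  · rcases hle.lt_or_eq with hlt | rfl
    · exact Or.inr ⟨hlt, heq⟩
    · exact absurd heq hne
  · exact Or.inl (measure_mono_null (inter_subset_inter_right _ (hc'.subset hle le_rfl)) hnull)

variable (T) in
def maximalSets (P : Set X → Prop) : Set (Set X) :=
  {J | ∃ m c, T.IsPath c m ∧ c m = J ∧ P J ∧ ∀ j < m, ¬ P (c j)}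

variable {P : Set X → Prop} {J : Set X}

theorem mem_of_mem_maximalSets (hJ : J ∈ T.maximalSets P) : T.Mem J := by
  obtain ⟨m, c, hc, rfl, -⟩ := hJ
  exact ⟨m, hc.mem_level le_rfl⟩

theorem prop_of_mem_maximalSets (hJ : J ∈ T.maximalSets P) : P J := by
  obtain ⟨-, -, -, -, hPJ, -⟩ := hJ
  exact hPJ

theorem subset_sUnion_maximalSets {I : Set X} (hI : T.Mem I) (hPI : P I) :
    I ⊆ ⋃₀ T.maximalSets P := by
  classical
  obtain ⟨m, hIm⟩ := hI
  obtain ⟨c, hc, rfl⟩ := exists_isPath hIm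
  have hex : ∃ j, P (c j) := ⟨m, hPI⟩
  have hkm : Nat.find hex ≤ m := Nat.find_le hPI
  refine (hc.subset hkm le_rfl).trans (subset_sUnion_of_mem ?_)
  exact ⟨Nat.find hex, c, ⟨hc.1, fun j hj => hc.2 j (by omega)⟩, rfl, Nat.find_spec hex,
    fun j hj => Nat.find_min hex hj⟩

theorem pairwise_aedisjoint_maximalSets : (T.maximalSets P).Pairwise (AEDisjoint μ) := by
  rintro - ⟨m, c, hc, rfl, hP, hmin⟩ - ⟨m', c', hc', rfl, hP', hmin'⟩ hne
  wlog hle : m ≤ m' generalizing m m' c c'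
  · exact (this m' c' hc' hP' hmin' m c hc hP hmin hne.symm (le_of_not_ge hle)).symm
  rcases hc.measure_inter_eq_zero_or_eq hc' hle hne with hnull | ⟨hlt, heq⟩
  · exact hnull
  · exact absurd (heq ▸ hP) (hmin' m hlt)

theorem mul_measure_sUnion_maximalSets_le {ν : Measure X} (hν : ν ≪ μ) {a : ℝ≥0∞}
    (h : ∀ J, T.Mem J → P J → a * μ J ≤ ν J) :
    a * μ (⋃₀ T.maximalSets P) ≤ ν (⋃₀ T.maximalSets P) := by
  have hcount : (T.maximalSets P).Countable :=
    T.countable_setOf_mem.mono fun _ => mem_of_mem_maximalSets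
  have hmeas : ∀ J ∈ T.maximalSets P, NullMeasurableSet J μ := fun J hJ => by
    obtain ⟨m, hm⟩ := mem_of_mem_maximalSets hJ
    exact (T.mem_meas m J hm).nullMeasurableSet
  rw [measure_sUnion₀ hcount pairwise_aedisjoint_maximalSets hmeas,
    measure_sUnion₀ hcount (pairwise_aedisjoint_maximalSets.mono' fun _ _ h => hν h)
      fun J hJ => (hmeas J hJ).mono_ac hν, ← ENNReal.tsum_mul_left]
  exact ENNReal.tsum_le_tsum fun J =>
    h J (mem_of_mem_maximalSets J.2) (prop_of_mem_maximalSets J.2)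

end TreeStruct

section MaxOp

variable {X : Type*} [MeasurableSpace X] {μ : Measure X} {φ : X → ℝ} {q t : ℝ}

theorem ofReal_rpow_mul_le_setLIntegral_of_lt_setAverage [IsFiniteMeasure μ] {J : Set X}
    (hq : 1 ≤ q) (hint : Integrable φ μ) (hintq : Integrable (fun x => |φ x| ^ q) μ)
    (hJ : μ J ≠ 0) (ht : 0 ≤ t) (htJ : t < ⨍ x in J, |φ x| ∂μ) :
    ENNReal.ofReal (t ^ q) * μ J ≤ ∫⁻ x in J, ENNReal.ofReal (|φ x| ^ q) ∂μ := by
  have jensen : (⨍ x in J, |φ x| ∂μ) ^ q ≤ ⨍ x in J, |φ x| ^ q ∂μ :=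
    (convexOn_rpow hq).map_set_average_le
      (continuousOn_id.rpow_const fun _ _ => Or.inr (by linarith)) isClosed_Ici hJ
      (measure_ne_top μ J) (ae_of_all _ fun x => mem_Ici.2 (abs_nonneg _))
      hint.abs.integrableOn hintq.integrableOn
  have hJreal : 0 < μ.real J := ENNReal.toReal_pos hJ (measure_ne_top μ J)
  have hreal : t ^ q * μ.real J ≤ ∫ x in J, |φ x| ^ q ∂μ := by
    have := (Real.rpow_le_rpow ht htJ.le (by linarith)).trans jensen
    rwa [setAverage_eq, smul_eq_mul, ← div_eq_inv_mul, le_div_iff₀ hJreal] at this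
  rw [← ofReal_integral_eq_lintegral_ofReal hintq.integrableOn
    (ae_of_all _ fun x => by positivity), ← ofReal_measureReal (measure_ne_top μ J),
    ← ENNReal.ofReal_mul (by positivity)]
  exact ENNReal.ofReal_le_ofReal hreal

theorem maxOp_eq_sSup_setAverage (T : TreeStruct μ) (φ : X → ℝ) (x : X) :
    maxOp T φ x = sSup ((fun I => ⨍ y in I, |φ y| ∂μ) '' {I | T.Mem I ∧ x ∈ I}) := by
  simp only [maxOp, setAverage_eq, smul_eq_mul, measureReal_def, div_eq_inv_mul]

theorem maxOp_nonneg (T : TreeStruct μ) (φ : X → ℝ) (x : X) : 0 ≤ maxOp T φ x :=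
  Real.sSup_nonneg <| forall_mem_image.2 fun _ _ => by positivity

theorem exists_lt_setAverage_of_lt_maxOp {T : TreeStruct μ} {x : X} (h : t < maxOp T φ x) :
    ∃ I, T.Mem I ∧ x ∈ I ∧ t < ⨍ y in I, |φ y| ∂μ := by
  rw [maxOp_eq_sSup_setAverage] at h
  have hne : {I | T.Mem I ∧ x ∈ I}.Nonempty := ⟨univ, T.univ_mem, mem_univ x⟩
  obtain ⟨-, ⟨I, ⟨hI, hxI⟩, rfl⟩, hlt⟩ := exists_lt_of_lt_csSup (hne.image _) h
  exact ⟨I, hI, hxI, hlt⟩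

/-- `maxOp` is a real `sSup`, hence `0` wherever the averages are unbounded; by the weak `(1,1)`
estimate this happens only on a null set. -/
theorem ae_bddAbove_setAverage [IsFiniteMeasure μ] (T : TreeStruct μ)
    (hint : Integrable φ μ) :
    ∀ᵐ x ∂μ, BddAbove ((fun I => ⨍ y in I, |φ y| ∂μ) '' {I | T.Mem I ∧ x ∈ I}) := by
  set B := {x | ¬BddAbove ((fun I => ⨍ y in I, |φ y| ∂μ) '' {I | T.Mem I ∧ x ∈ I})}
  set ν := μ.withDensity fun x => ENNReal.ofReal |φ x|
  have hB : ∀ n : ℕ, (n : ℝ≥0∞) * μ B ≤ ν univ := by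
    intro n
    set S := ⋃₀ T.maximalSets fun I => (n : ℝ) < ⨍ y in I, |φ y| ∂μ
    have hBS : B ⊆ S := by
      intro x hx
      obtain ⟨-, ⟨I, ⟨hI, hxI⟩, rfl⟩, hlt⟩ := not_bddAbove_iff.1 hx n
      exact T.subset_sUnion_maximalSets (P := fun I => (n : ℝ) < ⨍ y in I, |φ y| ∂μ) hI hlt hxI
    calc (n : ℝ≥0∞) * μ B ≤ n * μ S := by gcongr
      _ ≤ ν S := by
        refine T.mul_measure_sUnion_maximalSets_le (withDensity_absolutelyContinuous _ _)
          fun J ⟨m, hJ⟩ hlt => ?_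
        have := ofReal_rpow_mul_le_setLIntegral_of_lt_setAverage le_rfl hint
          (by simpa using hint.abs) (T.mem_pos m J hJ).ne' n.cast_nonneg hlt
        simpa [withDensity_apply'] using this
      _ ≤ ν univ := measure_mono (subset_univ S)
  have hν : ν univ ≠ ⊤ := by
    simpa [ν, withDensity_apply'] using hint.abs.lintegral_lt_top.ne
  rw [ae_iff]
  by_contra hB0
  obtain ⟨n, hn⟩ := ENNReal.exists_nat_mul_gt hB0 hν
  exact (hB n).not_gt hn

theorem ae_setAverage_le_maxOp [IsFiniteMeasure μ] (T : TreeStruct μ)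
    (hint : Integrable φ μ) :
    ∀ᵐ x ∂μ, ∀ I, T.Mem I → x ∈ I → ⨍ y in I, |φ y| ∂μ ≤ maxOp T φ x := by
  filter_upwards [ae_bddAbove_setAverage T hint] with x hx I hI hxI
  rw [maxOp_eq_sSup_setAverage]
  exact le_csSup hx ⟨I, ⟨hI, hxI⟩, rfl⟩

theorem ofReal_rpow_mul_measure_lt_maxOp_le [IsFiniteMeasure μ] (T : TreeStruct μ)
    (hq : 1 ≤ q) (hint : Integrable φ μ) (hintq : Integrable (fun x => |φ x| ^ q) μ)
    (ht : 0 ≤ t) :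
    ENNReal.ofReal (t ^ q) * μ {x | t < maxOp T φ x} ≤
      ∫⁻ x in {x | t < maxOp T φ x}, ENNReal.ofReal (|φ x| ^ q) ∂μ := by
  set S := ⋃₀ T.maximalSets fun I => t < ⨍ y in I, |φ y| ∂μ
  set ν := μ.withDensity fun x => ENNReal.ofReal (|φ x| ^ q)
  have hν : ν ≪ μ := withDensity_absolutelyContinuous _ _
  have hlt_sub : {x | t < maxOp T φ x} ⊆ S := by
    intro x hx
    obtain ⟨I, hI, hxI, hlt⟩ := exists_lt_setAverage_of_lt_maxOp hx
    exact T.subset_sUnion_maximalSets (P := fun I => t < ⨍ y in I, |φ y| ∂μ) hI hlt hxI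
  have hS_ae : S ≤ᵐ[μ] {x | t < maxOp T φ x} := by
    filter_upwards [ae_setAverage_le_maxOp T hint] with x hx
    rintro ⟨J, hJ, hxJ⟩
    exact (TreeStruct.prop_of_mem_maximalSets hJ).trans_le
      (hx J (TreeStruct.mem_of_mem_maximalSets hJ) hxJ)
  calc ENNReal.ofReal (t ^ q) * μ {x | t < maxOp T φ x}
      ≤ ENNReal.ofReal (t ^ q) * μ S := by gcongr
    _ ≤ ν S := T.mul_measure_sUnion_maximalSets_le hν fun J ⟨m, hJ⟩ hlt => by
        rw [withDensity_apply']
        exact ofReal_rpow_mul_le_setLIntegral_of_lt_setAverage hq hint hintq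
          (T.mem_pos m J hJ).ne' ht hlt
    _ ≤ ν {x | t < maxOp T φ x} := measure_mono_ae (hν.ae_le hS_ae)
    _ = _ := withDensity_apply' _ _

end MaxOp

section LayerCake

variable {X : Type*} [MeasurableSpace X]

theorem integral_indicator_Ioi_rpow {r f s : ℝ} (hr : -1 < r) (hf : 0 ≤ f) (hfs : f ≤ s) :
    ∫ t in (0 : ℝ)..s, (Ioi f).indicator (fun t => t ^ r) t =
      (s ^ (r + 1) - f ^ (r + 1)) / (r + 1) := by
  rw [intervalIntegral.integral_of_le (hf.trans hfs), integral_indicator measurableSet_Ioi,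
    Measure.restrict_restrict measurableSet_Ioi, inter_comm, Ioc_inter_Ioi, max_eq_right hf,
    ← intervalIntegral.integral_of_le hfs, integral_rpow (Or.inl hr)]

theorem ofReal_mul_setLIntegral_Ioc_mul_rpow_le {m : ℝ → ℝ≥0∞} {p f : ℝ} (hm : ∀ t, m t ≤ 1)
    (hp : 0 < p) (hf : 0 ≤ f) :
    ENNReal.ofReal p * ∫⁻ t in Ioc 0 f, m t * ENNReal.ofReal (t ^ (p - 1)) ≤
      ENNReal.ofReal (f ^ p) := by
  have hint : IntegrableOn (fun t : ℝ => t ^ (p - 1)) (Ioc 0 f) :=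
    (intervalIntegral.intervalIntegrable_rpow' (by linarith)).1
  calc ENNReal.ofReal p * ∫⁻ t in Ioc 0 f, m t * ENNReal.ofReal (t ^ (p - 1))
      ≤ ENNReal.ofReal p * ∫⁻ t in Ioc 0 f, ENNReal.ofReal (t ^ (p - 1)) := by
        gcongr with t
        exact mul_le_of_le_one_left zero_le (hm t)
    _ = ENNReal.ofReal (p * ∫ t in (0 : ℝ)..f, t ^ (p - 1)) := by
        rw [intervalIntegral.integral_of_le hf, ENNReal.ofReal_mul hp.le,
          ofReal_integral_eq_lintegral_ofReal hint ((ae_restrict_iff' measurableSet_Ioc).2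
            (ae_of_all _ fun t ht => Real.rpow_nonneg ht.1.le _))]
    _ = ENNReal.ofReal (f ^ p) := by
        rw [integral_rpow (Or.inl (by linarith)), sub_add_cancel, Real.zero_rpow hp.ne',
          sub_zero, mul_div_cancel₀ _ hp.ne']

theorem lintegral_ofReal_rpow_sub_rpow_div_eq {ν : Measure X} {g : X → ℝ} {r f : ℝ}
    (hr : 0 < r) (hf : 0 ≤ f) (hgν : AEMeasurable g ν) (hfg : ∀ᵐ x ∂ν, f ≤ g x) :
    ∫⁻ x, ENNReal.ofReal ((g x ^ r - f ^ r) / r) ∂ν =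
      ∫⁻ t in Ioi f, ν {x | t < g x} * ENNReal.ofReal (t ^ (r - 1)) := by
  have hint : ∀ t > 0, IntervalIntegrable ((Ioi f).indicator fun t => t ^ (r - 1))
      volume 0 t := fun t _ =>
    have h := intervalIntegral.intervalIntegrable_rpow' (a := 0) (b := t) (r := r - 1)
      (by linarith)
    ⟨h.1.indicator measurableSet_Ioi, h.2.indicator measurableSet_Ioi⟩
  have hind : ∀ t, ν {x | t < g x} * ENNReal.ofReal ((Ioi f).indicator (fun t => t ^ (r - 1)) t)
      = (Ioi f).indicator (fun t => ν {x | t < g x} * ENNReal.ofReal (t ^ (r - 1))) t :=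
    fun t => by by_cases ht : t ∈ Ioi f <;> simp [ht]
  calc ∫⁻ x, ENNReal.ofReal ((g x ^ r - f ^ r) / r) ∂ν
      = ∫⁻ x, ENNReal.ofReal
          (∫ t in (0 : ℝ)..g x, (Ioi f).indicator (fun t => t ^ (r - 1)) t) ∂ν := by
        refine lintegral_congr_ae (hfg.mono fun x hx => ?_)
        dsimp only
        rw [integral_indicator_Ioi_rpow (by linarith) hf hx, sub_add_cancel]
    _ = ∫⁻ t in Ioi 0, ν {x | t < g x} *
          ENNReal.ofReal ((Ioi f).indicator (fun t => t ^ (r - 1)) t) :=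
        lintegral_comp_eq_lintegral_meas_lt_mul ν (hfg.mono fun x hx => hf.trans hx) hgν hint
          (ae_of_all _ fun t => indicator_nonneg (fun t (ht : f < t) =>
            Real.rpow_nonneg (hf.trans ht.le) _) t)
    _ = _ := by
        simp_rw [hind]
        rw [lintegral_indicator measurableSet_Ioi, Measure.restrict_restrict measurableSet_Ioi,
          Ioi_inter_Ioi, sup_eq_left.2 hf]

theorem lintegral_ofReal_rpow_le_of_weakType {μ ν : Measure X} [IsProbabilityMeasure μ]
    {g : X → ℝ} {p q f : ℝ} (hp : 0 < p) (hqp : q < p) (hf : 0 ≤ f) (hg : ∀ x, 0 ≤ g x)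
    (hgμ : AEMeasurable g μ) (hgν : AEMeasurable g ν) (hfg : ∀ᵐ x ∂ν, f ≤ g x)
    (hweak : ∀ t, f < t → ENNReal.ofReal (t ^ q) * μ {x | t < g x} ≤ ν {x | t < g x}) :
    ∫⁻ x, ENNReal.ofReal (g x ^ p) ∂μ ≤
      ENNReal.ofReal (f ^ p) +
        ∫⁻ x, ENNReal.ofReal (p / (p - q) * (g x ^ (p - q) - f ^ (p - q))) ∂ν := by
  have hhigh : ∫⁻ t in Ioi f, μ {x | t < g x} * ENNReal.ofReal (t ^ (p - 1))
      ≤ ∫⁻ t in Ioi f, ν {x | t < g x} * ENNReal.ofReal (t ^ (p - q - 1)) := by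
    refine setLIntegral_mono' measurableSet_Ioi fun t (ht : f < t) => ?_
    have ht0 : 0 < t := hf.trans_lt ht
    rw [show p - 1 = p - q - 1 + q by ring, Real.rpow_add ht0,
      ENNReal.ofReal_mul (Real.rpow_nonneg ht0.le _)]
    calc μ {x | t < g x} * (ENNReal.ofReal (t ^ (p - q - 1)) * ENNReal.ofReal (t ^ q))
        = ENNReal.ofReal (t ^ q) * μ {x | t < g x} * ENNReal.ofReal (t ^ (p - q - 1)) := by ring
      _ ≤ ν {x | t < g x} * ENNReal.ofReal (t ^ (p - q - 1)) := by gcongr; exact hweak t ht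
  have hrhs : ∫⁻ x, ENNReal.ofReal (p / (p - q) * (g x ^ (p - q) - f ^ (p - q))) ∂ν =
      ENNReal.ofReal p * ∫⁻ t in Ioi f, ν {x | t < g x} * ENNReal.ofReal (t ^ (p - q - 1)) := by
    rw [← lintegral_ofReal_rpow_sub_rpow_div_eq (sub_pos.2 hqp) hf hgν hfg,
      ← lintegral_const_mul' _ _ ENNReal.ofReal_ne_top]
    refine lintegral_congr fun x => ?_
    rw [← ENNReal.ofReal_mul hp.le, mul_div_assoc', div_mul_eq_mul_div]
  rw [lintegral_rpow_eq_lintegral_meas_lt_mul μ (ae_of_all _ hg) hgμ hp,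
    ← Ioc_union_Ioi_eq_Ioi hf, lintegral_union measurableSet_Ioi Ioc_disjoint_Ioi_same,
    mul_add, hrhs]
  gcongr
  exact ofReal_mul_setLIntegral_Ioc_mul_rpow_le (fun t => prob_le_one) hp hf

theorem integral_rpow_le_of_weakType {μ : Measure X} [IsProbabilityMeasure μ] {g w : X → ℝ}
    {p q f : ℝ} (hp : 0 < p) (hqp : q < p) (hf : 0 ≤ f) (hg : ∀ x, 0 ≤ g x) (hw : ∀ x, 0 ≤ w x)
    (hfg : ∀ᵐ x ∂μ, f ≤ g x) (hgp : Integrable (fun x => g x ^ p) μ) (hwi : Integrable w μ)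
    (hgw : Integrable (fun x => g x ^ (p - q) * w x) μ)
    (hweak : ∀ t, f < t → ENNReal.ofReal (t ^ q) * μ {x | t < g x} ≤
      ∫⁻ x in {x | t < g x}, ENNReal.ofReal (w x) ∂μ) :
    ∫ x, g x ^ p ∂μ ≤
      f ^ p - p / (p - q) * f ^ (p - q) * ∫ x, w x ∂μ +
        p / (p - q) * ∫ x, g x ^ (p - q) * w x ∂μ := by
  set ν := μ.withDensity fun x => ENNReal.ofReal (w x)
  have hν : ν ≪ μ := withDensity_absolutelyContinuous _ _
  have hgm : AEMeasurable g μ := by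
    simpa only [Real.rpow_rpow_inv (hg _) hp.ne'] using hgp.aemeasurable.pow_const p⁻¹
  set ψ := fun x => w x * (p / (p - q) * (g x ^ (p - q) - f ^ (p - q)))
  have hψ_eq : ψ = fun x =>
      p / (p - q) * (g x ^ (p - q) * w x) - p / (p - q) * f ^ (p - q) * w x := by
    ext x; ring
  have hψi : Integrable ψ μ := hψ_eq ▸ (hgw.const_mul _).sub (hwi.const_mul _)
  have hψ_nonneg : 0 ≤ᵐ[μ] ψ := hfg.mono fun x hx => mul_nonneg (hw x) (mul_nonneg
    (div_nonneg hp.le (by linarith)) (sub_nonneg.2 (Real.rpow_le_rpow hf hx (by linarith))))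
  have hψ_integral : ∫ x, ψ x ∂μ =
      p / (p - q) * ∫ x, g x ^ (p - q) * w x ∂μ - p / (p - q) * f ^ (p - q) * ∫ x, w x ∂μ := by
    rw [hψ_eq, integral_sub (hgw.const_mul _) (hwi.const_mul _), integral_const_mul,
      integral_const_mul]
  have key := lintegral_ofReal_rpow_le_of_weakType hp hqp hf hg hgm (hgm.mono_ac hν)
    (hν.ae_le hfg) fun t ht => by rw [withDensity_apply']; exact hweak t ht
  rw [lintegral_withDensity_eq_lintegral_mul₀ (by fun_prop) (by fun_prop)] at key
  simp_rw [Pi.mul_apply, ← ENNReal.ofReal_mul (hw _)] at key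
  rw [← ofReal_integral_eq_lintegral_ofReal hgp (ae_of_all _ fun x => Real.rpow_nonneg (hg x) p),
    ← ofReal_integral_eq_lintegral_ofReal hψi hψ_nonneg,
    ← ENNReal.ofReal_add (Real.rpow_nonneg hf p) (integral_nonneg_of_ae hψ_nonneg),
    ENNReal.ofReal_le_ofReal_iff (add_nonneg (Real.rpow_nonneg hf p)
      (integral_nonneg_of_ae hψ_nonneg))] at key
  linarith

end LayerCake

theorem maximal_basic_inequality_general {X : Type*} [MeasurableSpace X]
    (μ : Measure X) [IsProbabilityMeasure μ] (T : TreeStruct μ)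
    (p q f A : ℝ) (hq : 1 < q) (hqp : q < p)
    (φ : X → ℝ) (hφ : ∀ x, 0 ≤ φ x) (hint : Integrable φ μ)
    (hintq : Integrable (fun x => φ x ^ q) μ)
    (hMp : Integrable (fun x => maxOp T φ x ^ p) μ)
    (hMmix : Integrable (fun x => maxOp T φ x ^ (p - q) * φ x ^ q) μ)
    (hf : ∫ x, φ x ∂μ = f) (hA : ∫ x, φ x ^ q ∂μ = A) :
    ∫ x, maxOp T φ x ^ p ∂μ ≤
      f ^ p - (p / (p - q)) * f ^ (p - q) * A +
        (p / (p - q)) * ∫ x, maxOp T φ x ^ (p - q) * φ x ^ q ∂μ := by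
  have habs : ∀ x, |φ x| = φ x := fun x => abs_of_nonneg (hφ x)
  have hf0 : 0 ≤ f := hf ▸ integral_nonneg hφ
  have hfM : ∀ᵐ x ∂μ, f ≤ maxOp T φ x := by
    filter_upwards [ae_setAverage_le_maxOp T hint] with x hx
    simpa [habs, average_eq_integral, hf] using hx univ T.univ_mem (mem_univ x)
  rw [← hA]
  refine integral_rpow_le_of_weakType (by linarith) hqp hf0 (maxOp_nonneg T φ)
    (fun x => Real.rpow_nonneg (hφ x) q) hfM hMp hintq hMmix fun t ht => ?_
  simpa only [habs] using ofReal_rpow_mul_measure_lt_maxOp_le T hq.le hint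
    (by simpa only [habs] using hintq) (hf0.trans ht.le)

/-- Lemma 4.1: for `1 < q < p` and `φ ≥ 0` in `L^p` with `∫φ = f`, `∫φ^q = A`,
`∫_X (ℳ_𝒯 φ)^p dμ ≤ f^p - (p/(p-q)) f^{p-q} A + (p/(p-q)) ∫_X (ℳ_𝒯 φ)^{p-q} φ^q dμ`. -/
theorem maximal_basic_inequality {X : Type*} [MeasurableSpace X]
    (μ : Measure X) [IsProbabilityMeasure μ] [NullSingletonClass μ] (T : TreeStruct μ)
    (p q f A : ℝ) (hq : 1 < q) (hqp : q < p)
    (φ : X → ℝ) (hφ : ∀ x, 0 ≤ φ x) (hint : Integrable φ μ)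
    (hintq : Integrable (fun x => φ x ^ q) μ)
    (hintp : Integrable (fun x => φ x ^ p) μ)
    (hMp : Integrable (fun x => maxOp T φ x ^ p) μ)
    (hMmix : Integrable (fun x => maxOp T φ x ^ (p - q) * φ x ^ q) μ)
    (hf : ∫ x, φ x ∂μ = f) (hA : ∫ x, φ x ^ q ∂μ = A) :
    ∫ x, maxOp T φ x ^ p ∂μ ≤
      f ^ p - (p / (p - q)) * f ^ (p - q) * A +
        (p / (p - q)) * ∫ x, maxOp T φ x ^ (p - q) * φ x ^ q ∂μ :=
  maximal_basic_inequality_general μ T p q f A hq hqp φ hφ hint hintq hMp hMmix hf hA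
end

section
/- Let 1 < q < p, and let I, F, f, A > 0 satisfy the inequality I ≤ f^p − (p/(p−q)) f^{p−q} A + (p/(p−q)) I^{(p−q)/p} F^{q/p}, together with f^q ≤ A and A^{p/q} ≤ F. Then (I/F)^{1/p} ≤ h^{−1}(k(f,A,F)), i.e., I ≤ F · (h^{−1}((p f^{p−q} A − (p−q) f^p)/F))^p, where h : [1, ∞) → (−∞, q] is h(t) = p t^{p−q} − (p−q) t^p (a strictly decreasing bijection) and h^{−1} is its inverse, provided additionally that I ≥ F (so that (I/F)^{1/p} ≥ 1). -/
/-!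
With `s = (I/F)^(1/p) ≥ 1` we have `I = F s^p` and `I^((p-q)/p) F^(q/p) = F s^(p-q)`, so after
multiplying by `(p-q)/F` the hypothesis reads `k(f,A,F) ≤ h(s)`. As `h(t) = k(f,A,F)` and `h` is
strictly decreasing on `[1, ∞)`, this gives `s ≤ t`, that is `I = F s^p ≤ F t^p`.
-/

open Real Set

theorem strictAntiOn_mul_rpow_sub_sub_mul_rpow {p q : ℝ} (hq : 0 < q) (hqp : q < p) :
    StrictAntiOn (fun t : ℝ => p * t ^ (p - q) - (p - q) * t ^ p) (Ici 1) := by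
  apply strictAntiOn_of_deriv_neg (convex_Ici 1)
  · intro x hx
    have hx0 : x ≠ 0 := (zero_lt_one.trans_le hx).ne'
    fun_prop (disch := exact Or.inl hx0)
  · intro x hx
    rw [interior_Ici] at hx
    have hx1 : 1 < x := hx
    have hd : HasDerivAt (fun t : ℝ => p * t ^ (p - q) - (p - q) * t ^ p)
        (p * ((p - q) * x ^ (p - q - 1)) - (p - q) * (p * x ^ (p - 1))) x :=
      ((hasDerivAt_rpow_const (Or.inl (by positivity))).const_mul p).sub
        ((hasDerivAt_rpow_const (Or.inl (by positivity))).const_mul (p - q))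
    rw [hd.deriv]
    have hlt : x ^ (p - q - 1) < x ^ (p - 1) := rpow_lt_rpow_of_exponent_lt hx1 (by linarith)
    nlinarith [mul_pos (hq.trans hqp) (sub_pos.mpr hqp)]

theorem mul_rpow_rpow_sub_div_mul_rpow_div {F s : ℝ} (hF : 0 < F) (hs : 0 ≤ s) {p : ℝ}
    (hp : p ≠ 0) (q : ℝ) : (F * s ^ p) ^ ((p - q) / p) * F ^ (q / p) = F * s ^ (p - q) := by
  rw [mul_rpow hF.le (rpow_nonneg hs p), ← rpow_mul hs, mul_div_cancel₀ _ hp,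
    mul_right_comm, ← rpow_add hF, ← add_div, sub_add_cancel, div_self hp, rpow_one]

theorem upper_bound_from_inequality_general (p q I F f A : ℝ) (hq : 1 < q) (hqp : q < p)
    (hF : 0 < F)
    (hineq : I ≤ f ^ p - (p / (p - q)) * f ^ (p - q) * A +
      (p / (p - q)) * I ^ ((p - q) / p) * F ^ (q / p))
    (hFI : F ≤ I) :
    ∀ t : ℝ, 1 ≤ t →
      p * t ^ (p - q) - (p - q) * t ^ p =
        (p * f ^ (p - q) * A - (p - q) * f ^ p) / F →
      I ≤ F * t ^ p := by
  intro t ht hht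
  have hp : 0 < p := by linarith
  set s := (I / F) ^ p⁻¹ with hs
  have hs1 : 1 ≤ s := one_le_rpow ((one_le_div hF).mpr hFI) (by positivity)
  have hIs : I = F * s ^ p := by
    rw [hs, rpow_inv_rpow (div_nonneg (hF.le.trans hFI) hF.le) hp.ne', mul_div_cancel₀ _ hF.ne']
  have hks : (p * f ^ (p - q) * A - (p - q) * f ^ p) / F ≤ p * s ^ (p - q) - (p - q) * s ^ p := by
    rw [hIs, mul_assoc _ ((F * s ^ p) ^ _),
      mul_rpow_rpow_sub_div_mul_rpow_div hF (by positivity) hp.ne'] at hineq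
    have hpq : 0 < p - q := by linarith
    rw [div_le_iff₀ hF]
    field_simp at hineq
    linarith
  have hst : s ≤ t :=
    ((strictAntiOn_mul_rpow_sub_sub_mul_rpow (by linarith) hqp).le_iff_ge ht hs1).mp (hht ▸ hks)
  calc I = F * s ^ p := hIs
    _ ≤ F * t ^ p := by gcongr

/-- Let `1 < q < p` and `I, F, f, A > 0` with
`I ≤ f^p - (p/(p-q)) f^{p-q} A + (p/(p-q)) I^{(p-q)/p} F^{q/p}`, `f^q ≤ A`,
`A^{p/q} ≤ F` and `F ≤ I`.  Then `(I/F)^{1/p} ≤ h⁻¹(k(f,A,F))`, i.e. for every `t ≥ 1`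
with `h(t) = k(f,A,F)` (where `h(t) = p t^{p-q} - (p-q) t^p` is strictly decreasing on
`[1,∞)`) one has `I ≤ F · t^p`. -/
theorem upper_bound_from_inequality (p q I F f A : ℝ) (hq : 1 < q) (hqp : q < p)
    (hI : 0 < I) (hF : 0 < F) (hf : 0 < f) (hA : 0 < A)
    (hineq : I ≤ f ^ p - (p / (p - q)) * f ^ (p - q) * A +
      (p / (p - q)) * I ^ ((p - q) / p) * F ^ (q / p))
    (hfA : f ^ q ≤ A) (hAF : A ^ (p / q) ≤ F) (hFI : F ≤ I) :
    ∀ t : ℝ, 1 ≤ t →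
      p * t ^ (p - q) - (p - q) * t ^ p =
        (p * f ^ (p - q) * A - (p - q) * f ^ p) / F →
      I ≤ F * t ^ p :=
  upper_bound_from_inequality_general p q I F f A hq hqp hF hineq hFI
end

section
/- With the set-up of the family 𝒮 = 𝒮_α (each I ∈ 𝒮 satisfies Σ_{J ∈ ℱ(I)} μ(J) = (1−α)μ(I), ranks r(I), x_I = λ γ^{r(I)} μ(I)^{1/q}, a_I = α μ(I)), define y_I = (1/μ(I)) Σ_{𝒮 ∋ J ⊆ I} a_J^{1/q'} x_J, where 1/q + 1/q' = 1. If γ(1−α) < 1 then a_I^{1/q} y_I = (α/(1 − γ(1−α))) x_I for every I ∈ 𝒮. -/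
open MeasureTheory Set

/-- Equation (3.9): with the set-up of the family `𝒮 = 𝒮_α` (ranks `r`,
`x_I = λ γ^{r(I)} μ(I)^{1/q}`, `a_I = α μ(I)`), defining
`y_I = (1/μ(I)) Σ_{𝒮 ∋ J ⊆ I} a_J^{1/q'} x_J` where `1/q + 1/q' = 1`, if `γ(1-α) < 1`
then `a_I^{1/q} y_I = (α/(1-γ(1-α))) x_I` for every `I ∈ 𝒮`. -/
theorem a_pow_mul_y_eq {X : Type*} [MeasurableSpace X]
    (μ : Measure X) [IsProbabilityMeasure μ]
    (α γ lam q q' : ℝ) (hα0 : 0 < α) (hα1 : α < 1) (hγ : 0 < γ) (hq : 1 < q)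
    (hq' : 1 / q + 1 / q' = 1) (hlam : 0 < lam) (hγ1 : γ * (1 - α) < 1)
    (S : Set (Set X)) (hScount : S.Countable)
    (r : Set X → ℕ) (parent : Set X → Set X)
    (huniv : Set.univ ∈ S) (hr0 : r Set.univ = 0)
    (hroot : ∀ I ∈ S, r I = 0 → I = Set.univ)
    (hparent : ∀ J ∈ S, 0 < r J →
      parent J ∈ S ∧ J ⊆ parent J ∧ r J = r (parent J) + 1)
    (hchild : ∀ I ∈ S,
      ∑' J : {J : Set X // J ∈ S ∧ parent J = I ∧ r J = r I + 1}, μ (J : Set X) =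
        ENNReal.ofReal (1 - α) * μ I)
    (hanc : ∀ I ∈ S, ∀ J ∈ S, r I < r J → J ⊆ I → parent J ⊆ I)
    (hself : ∀ I ∈ S, ∀ J ∈ S, J ⊆ I → r J = r I → J = I) :
    ∀ I ∈ S,
      (α * (μ I).toReal) ^ (1 / q) *
        ((1 / (μ I).toReal) *
          ∑' J : {J : Set X // J ∈ S ∧ J ⊆ I},
            (α * (μ (J : Set X)).toReal) ^ (1 / q') *
              (lam * γ ^ r (J : Set X) * ((μ (J : Set X)).toReal) ^ (1 / q))) =
      (α / (1 - γ * (1 - α))) *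
        (lam * γ ^ r I * ((μ I).toReal) ^ (1 / q)) := by
  intro I hI
  -- basic positivity facts
  have hs0 : 0 < 1 - γ * (1 - α) := by linarith
  have h1α : (0:ℝ) ≤ 1 - α := by linarith
  have hγα0 : 0 ≤ γ * (1 - α) := by positivity
  have h1q : (0:ℝ) < 1 / q := by positivity
  have h1q1 : 1 / q < 1 := by
    rw [div_lt_one (by linarith)]; linarith
  have h1q' : (0:ℝ) < 1 / q' := by linarith [hq']
  -- ancestors
  have hA : ∀ k, ∀ K, K ∈ S → k ≤ r K → ∃ L, L ∈ S ∧ K ⊆ L ∧ r L + k = r K := by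
    intro k
    induction k with
    | zero => exact fun K hK _ => ⟨K, hK, subset_rfl, rfl⟩
    | succ k ih =>
      intro K hK hk
      obtain ⟨hPS, hKP, hrk⟩ := hparent K hK (by omega)
      obtain ⟨L, hLS, hPL, hrL⟩ := ih (parent K) hPS (by omega)
      exact ⟨L, hLS, hKP.trans hPL, by omega⟩
  -- every member of S contained in I has rank at least r I
  have hB : ∀ J, J ∈ S → J ⊆ I → r I ≤ r J := by
    intro J hJ hJI
    by_contra h
    push_neg at h
    obtain ⟨L, hLS, hIL, hrL⟩ := hA (r I - r J) I hI (by omega)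
    have hJL : J = L := hself L hLS J hJ (hJI.trans hIL) (by omega)
    have hIJ : I ⊆ J := hJL ▸ hIL
    have : J = I := hJI.antisymm hIJ
    have := congrArg r this
    omega
  -- the layers of the subtree below I
  set T : ℕ → Set (Set X) := fun m => {J | J ∈ S ∧ J ⊆ I ∧ r J = r I + m} with hT
  have hTmem : ∀ (m : ℕ) (J : Set X), J ∈ T m → J ∈ S ∧ J ⊆ I ∧ r J = r I + m :=
    fun _ _ h => h
  -- total measure of each layer
  have hb : ∀ m, ∑' J : T m, μ (J : Set X) = ENNReal.ofReal (1 - α) ^ m * μ I := by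
    intro m
    induction m with
    | zero =>
      have hT0 : T 0 = {I} := by
        ext J
        simp only [hT, mem_setOf_eq, mem_singleton_iff]
        constructor
        · rintro ⟨h1, h2, h3⟩
          exact hself I hI J h1 h2 (by omega)
        · rintro rfl
          exact ⟨hI, subset_rfl, rfl⟩
      rw [hT0, tsum_singleton I (fun J => μ J), pow_zero, one_mul]
    | succ m ih =>
      have hmem : ∀ J : ↥(T (m + 1)), parent (J : Set X) ∈ T m := by
        intro J
        obtain ⟨hJ1, hJ2, hJ3⟩ := hTmem _ _ J.2
        obtain ⟨hPS, hsub, hrk⟩ := hparent _ hJ1 (by omega)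
        exact ⟨hPS, hanc I hI _ hJ1 (by omega) hJ2, by omega⟩
      have hmemC : ∀ J : ↥(T (m + 1)), (J : Set X) ∈ S ∧
          parent (J : Set X) = parent (J : Set X) ∧
          r (J : Set X) = r (parent (J : Set X)) + 1 := by
        intro J
        obtain ⟨hJ1, hJ2, hJ3⟩ := hTmem _ _ J.2
        exact ⟨hJ1, rfl, (hparent _ hJ1 (by omega)).2.2⟩
      have hback : ∀ p : (Σ K : ↥(T m), {J : Set X // J ∈ S ∧
          parent J = (K : Set X) ∧ r J = r (K : Set X) + 1}),
          ((p.2 : Set X)) ∈ T (m + 1) := by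
        rintro ⟨⟨K, hK⟩, ⟨J, hJ1, hJ2, hJ3⟩⟩
        obtain ⟨hK1, hK2, hK3⟩ := hTmem _ _ hK
        have hJ2' : parent J = K := hJ2
        have hJ3' : r J = r K + 1 := hJ3
        have hsub : J ⊆ parent J := (hparent J hJ1 (by omega)).2.1
        show J ∈ S ∧ J ⊆ I ∧ r J = r I + (m + 1)
        exact ⟨hJ1, (hJ2' ▸ hsub).trans hK2, by omega⟩
      let e : ↥(T (m + 1)) ≃ (Σ K : ↥(T m), {J : Set X // J ∈ S ∧
          parent J = (K : Set X) ∧ r J = r (K : Set X) + 1}) :=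
        { toFun := fun J => ⟨⟨parent (J : Set X), hmem J⟩, ⟨(J : Set X), hmemC J⟩⟩
          invFun := fun p => ⟨(p.2 : Set X), hback p⟩
          left_inv := fun J => rfl
          right_inv := by
            rintro ⟨⟨K, hK⟩, ⟨J, hJ1, hJ2, hJ3⟩⟩
            have hJ2' : parent J = K := hJ2
            subst hJ2'
            rfl }
      calc ∑' J : ↥(T (m + 1)), μ (J : Set X)
          = ∑' p : (Σ K : ↥(T m), {J : Set X // J ∈ S ∧
              parent J = (K : Set X) ∧ r J = r (K : Set X) + 1}), μ ((p.2 : Set X)) := by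
            rw [← Equiv.tsum_eq e.symm (fun J : ↥(T (m + 1)) => μ (J : Set X))]
            exact tsum_congr fun p => rfl
        _ = ∑' K : ↥(T m), ∑' J : {J : Set X // J ∈ S ∧
              parent J = (K : Set X) ∧ r J = r (K : Set X) + 1}, μ (J : Set X) :=
            ENNReal.tsum_sigma' _
        _ = ∑' K : ↥(T m), ENNReal.ofReal (1 - α) * μ (K : Set X) :=
            tsum_congr fun K => hchild (K : Set X) (hTmem _ _ K.2).1
        _ = ENNReal.ofReal (1 - α) * ∑' K : ↥(T m), μ (K : Set X) :=
            ENNReal.tsum_mul_left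
        _ = ENNReal.ofReal (1 - α) ^ (m + 1) * μ I := by
            rw [ih]; ring
  -- the total weighted sum over the subtree below I, in ℝ≥0∞
  set F : Set X → ENNReal := fun J => ENNReal.ofReal (γ ^ r J) * μ J with hF
  let e2 : (Σ m : ℕ, T m) ≃ {J : Set X // J ∈ S ∧ J ⊆ I} :=
    { toFun := fun p => ⟨p.2.1, p.2.2.1, p.2.2.2.1⟩
      invFun := fun J => ⟨r (J : Set X) - r I, ⟨(J : Set X), J.2.1, J.2.2,
        by have := hB (J : Set X) J.2.1 J.2.2; omega⟩⟩
      left_inv := by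
        rintro ⟨m, ⟨J, hJ1, hJ2, hJ3⟩⟩
        have hm : r J - r I = m := by omega
        subst hm
        rfl
      right_inv := by
        rintro ⟨J, hJ⟩
        rfl }
  have htot : ∑' J : {J : Set X // J ∈ S ∧ J ⊆ I}, F (J : Set X) =
      ENNReal.ofReal (γ ^ r I) *
        (ENNReal.ofReal ((1 - γ * (1 - α))⁻¹) * μ I) := by
    have hlayer : ∀ m : ℕ, ∑' J : T m, F (J : Set X) =
        ENNReal.ofReal (γ ^ r I) * (ENNReal.ofReal (γ * (1 - α))) ^ m * μ I := by
      intro m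
      have hcongr : ∀ J : T m, F (J : Set X) =
          ENNReal.ofReal (γ ^ (r I + m)) * μ (J : Set X) := by
        intro J
        simp only [hF, (hTmem _ _ J.2).2.2]
      rw [tsum_congr hcongr, ENNReal.tsum_mul_left, hb m]
      rw [pow_add, ENNReal.ofReal_mul (by positivity : (0:ℝ) ≤ γ ^ r I),
        ENNReal.ofReal_mul hγ.le, mul_pow]
      simp only [ENNReal.ofReal_pow hγ.le, ENNReal.ofReal_pow h1α]
      ring
    have h2 : ∑' J : {J : Set X // J ∈ S ∧ J ⊆ I}, F (J : Set X) =
        ∑' m : ℕ, ∑' J : T m, F (J : Set X) := by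
      rw [← Equiv.tsum_eq e2 (fun J : {J : Set X // J ∈ S ∧ J ⊆ I} => F (J : Set X)),
        ENNReal.tsum_sigma']
      exact tsum_congr fun m => tsum_congr fun J => rfl
    rw [h2, tsum_congr hlayer]
    calc ∑' m : ℕ, ENNReal.ofReal (γ ^ r I) *
            (ENNReal.ofReal (γ * (1 - α))) ^ m * μ I
        = ENNReal.ofReal (γ ^ r I) *
            ((∑' m : ℕ, (ENNReal.ofReal (γ * (1 - α))) ^ m) * μ I) := by
          rw [← ENNReal.tsum_mul_right, ← ENNReal.tsum_mul_left]
          exact tsum_congr fun m => by ring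
      _ = ENNReal.ofReal (γ ^ r I) *
            (ENNReal.ofReal ((1 - γ * (1 - α))⁻¹) * μ I) := by
          rw [ENNReal.tsum_geometric, ENNReal.ofReal_inv_of_pos hs0,
            ENNReal.ofReal_sub 1 hγα0, ENNReal.ofReal_one]
  -- now compute the real sum
  have hμfin : ∀ J : Set X, μ J ≠ ⊤ := fun J => measure_ne_top μ J
  have hFfin : ∀ J : Set X, F J ≠ ⊤ := fun J =>
    ENNReal.mul_ne_top ENNReal.ofReal_ne_top (hμfin J)
  have hFto : ∀ J : Set X, (F J).toReal = γ ^ r J * (μ J).toReal := by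
    intro J
    rw [hF, ENNReal.toReal_mul, ENNReal.toReal_ofReal (by positivity)]
  have hpt : ∀ J : {J : Set X // J ∈ S ∧ J ⊆ I},
      (α * (μ (J : Set X)).toReal) ^ (1 / q') *
        (lam * γ ^ r (J : Set X) * ((μ (J : Set X)).toReal) ^ (1 / q)) =
      (lam * α ^ (1 / q')) * (F (J : Set X)).toReal := by
    intro J
    rw [hFto, Real.mul_rpow hα0.le ENNReal.toReal_nonneg]
    have hmul : ((μ (J : Set X)).toReal) ^ (1 / q') *
        ((μ (J : Set X)).toReal) ^ (1 / q) = (μ (J : Set X)).toReal := by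
      rw [← Real.rpow_add' ENNReal.toReal_nonneg (by rw [add_comm, hq']; norm_num)]
      rw [add_comm, hq', Real.rpow_one]
    calc α ^ (1 / q') * ((μ (J : Set X)).toReal) ^ (1 / q') *
          (lam * γ ^ r (J : Set X) * ((μ (J : Set X)).toReal) ^ (1 / q))
        = (lam * α ^ (1 / q')) * (γ ^ r (J : Set X) *
            (((μ (J : Set X)).toReal) ^ (1 / q') *
              ((μ (J : Set X)).toReal) ^ (1 / q))) := by ring
      _ = (lam * α ^ (1 / q')) * (γ ^ r (J : Set X) * (μ (J : Set X)).toReal) := by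
          rw [hmul]
  have hsum : ∑' J : {J : Set X // J ∈ S ∧ J ⊆ I},
      (α * (μ (J : Set X)).toReal) ^ (1 / q') *
        (lam * γ ^ r (J : Set X) * ((μ (J : Set X)).toReal) ^ (1 / q)) =
      (lam * α ^ (1 / q')) *
        (γ ^ r I * ((1 - γ * (1 - α))⁻¹ * (μ I).toReal)) := by
    rw [tsum_congr hpt, tsum_mul_left]
    congr 1
    have hTR := ENNReal.tsum_toReal_eq (f := fun J : {J : Set X // J ∈ S ∧ J ⊆ I} =>
      F (J : Set X)) (fun J => hFfin (J : Set X))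
    rw [← hTR, htot, ENNReal.toReal_mul, ENNReal.toReal_mul,
      ENNReal.toReal_ofReal (by positivity), ENNReal.toReal_ofReal (by positivity)]
  rw [hsum]
  -- final algebra
  rcases eq_or_ne (μ I).toReal 0 with hμ0 | hμ0
  · rw [hμ0, mul_zero, Real.zero_rpow (by positivity : (1:ℝ)/q ≠ 0)]
    ring
  · have hμpos : 0 < (μ I).toReal :=
      lt_of_le_of_ne ENNReal.toReal_nonneg (Ne.symm hμ0)
    rw [Real.mul_rpow hα0.le ENNReal.toReal_nonneg]
    have hαmul : α ^ (1 / q) * α ^ (1 / q') = α := by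
      rw [← Real.rpow_add hα0, hq', Real.rpow_one]
    have htt : 1 / (μ I).toReal * (μ I).toReal = 1 := by
      field_simp
    calc α ^ (1 / q) * ((μ I).toReal) ^ (1 / q) *
          (1 / (μ I).toReal *
            (lam * α ^ (1 / q') * (γ ^ r I * ((1 - γ * (1 - α))⁻¹ * (μ I).toReal))))
        = (α ^ (1 / q) * α ^ (1 / q')) * (lam * γ ^ r I * ((μ I).toReal) ^ (1 / q)) *
            ((1 - γ * (1 - α))⁻¹ * (1 / (μ I).toReal * (μ I).toReal)) := by ring
      _ = α * (lam * γ ^ r I * ((μ I).toReal) ^ (1 / q)) *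
            ((1 - γ * (1 - α))⁻¹ * 1) := by rw [hαmul, htt]
      _ = α / (1 - γ * (1 - α)) * (lam * γ ^ r I * ((μ I).toReal) ^ (1 / q)) := by
          rw [div_eq_mul_inv]; ring
end

section
/- Let φ_α = Σ_{I ∈ 𝒮} (x_I / a_I^{1/q}) χ_{A_I}, where A_I = I \ ⋃_{J ∈ 𝒮, J* = I} J has μ(A_I) = α μ(I), x_I = λ γ^{r(I)} μ(I)^{1/q} with λ = f α^{−1/q'}(1 − γ(1−α)), and γ = (z−α)/(z(1−α)) for some z with γ(1−α) < 1 and γ^q(1−α) < 1. Then ∫_X φ_α dμ = f and ∫_X φ_α^q dμ = f^q α (1−α)^{q−1} / (−(z−α)^q + (1−α)^{q−1} z^q). -/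
/-! On the cell `A_I` the function `φ_α` is constant, equal to
`λ α^{-1/q} γ^{r(I)} = (f/z) γ^{r(I)}`, and the cells are almost disjoint, so
`∫ φ_α^p dμ = Σ_I ((f/z) γ^{r(I)})^p α μ(I)` for `p = 1, q`. The children of every node carry
the fraction `1 - α` of its measure, hence the nodes of rank `n` have total measure `(1 - α)^n`,
and both integrals are geometric series with ratio `γ^p (1 - α) < 1`. -/

open MeasureTheory Set Function
open scoped ENNReal

section RankedTree

variable {β : Type*} (S : Set β) (r : β → ℕ) (parent : β → β)

def rankLevel (n : ℕ) : Set β := {I | I ∈ S ∧ r I = n}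

def childSet (I : β) : Set β := {J | J ∈ S ∧ parent J = I ∧ r J = r I + 1}

variable {S r parent} {root : β}

lemma rankLevel_zero (hroot_mem : root ∈ S) (hr_root : r root = 0)
    (hroot : ∀ I ∈ S, r I = 0 → I = root) : rankLevel S r 0 = {root} := by
  ext I
  exact ⟨fun hI => hroot I hI.1 hI.2, fun hI => hI ▸ ⟨hroot_mem, hr_root⟩⟩

lemma rankLevel_succ (hparent : ∀ J ∈ S, 0 < r J → parent J ∈ S ∧ r J = r (parent J) + 1)
    (n : ℕ) : rankLevel S r (n + 1) = ⋃ I ∈ rankLevel S r n, childSet S r parent I := by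
  ext J
  simp only [rankLevel, childSet, mem_ofPred_eq, mem_iUnion, exists_prop]
  constructor
  · rintro ⟨hJ, hJr⟩
    obtain ⟨hpS, hpr⟩ := hparent J hJ (by omega)
    exact ⟨parent J, ⟨hpS, by omega⟩, hJ, rfl, hpr⟩
  · rintro ⟨I, ⟨-, rfl⟩, hJ, -, hJr⟩
    exact ⟨hJ, hJr⟩

lemma pairwiseDisjoint_childSet (s : Set β) : s.PairwiseDisjoint (childSet S r parent) := by
  intro I _ I' _ hne
  refine disjoint_left.2 ?_
  rintro J ⟨-, rfl, -⟩ ⟨-, h, -⟩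
  exact hne h

variable {w : β → ℝ≥0∞} {c : ℝ≥0∞}

lemma tsum_rankLevel (hroot_mem : root ∈ S) (hr_root : r root = 0)
    (hroot : ∀ I ∈ S, r I = 0 → I = root)
    (hparent : ∀ J ∈ S, 0 < r J → parent J ∈ S ∧ r J = r (parent J) + 1)
    (hchild : ∀ I ∈ S, ∑' J : childSet S r parent I, w J = c * w I) (n : ℕ) :
    ∑' I : rankLevel S r n, w I = c ^ n * w root := by
  induction n with
  | zero => rw [rankLevel_zero hroot_mem hr_root hroot, tsum_singleton, pow_zero, one_mul]
  | succ n ih =>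
    calc ∑' J : rankLevel S r (n + 1), w J
        = ∑' I : rankLevel S r n, ∑' J : childSet S r parent I, w J := by
          rw [rankLevel_succ hparent, ENNReal.tsum_biUnion' (pairwiseDisjoint_childSet _)]
      _ = c * ∑' I : rankLevel S r n, w I := by
          rw [← ENNReal.tsum_mul_left]
          exact tsum_congr fun I => hchild I I.2.1
      _ = c ^ (n + 1) * w root := by rw [ih, pow_succ', mul_assoc]

lemma tsum_mul_rank (hroot_mem : root ∈ S) (hr_root : r root = 0)
    (hroot : ∀ I ∈ S, r I = 0 → I = root)
    (hparent : ∀ J ∈ S, 0 < r J → parent J ∈ S ∧ r J = r (parent J) + 1)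
    (hchild : ∀ I ∈ S, ∑' J : childSet S r parent I, w J = c * w I) (F : ℕ → ℝ≥0∞) :
    ∑' I : S, F (r I) * w I = ∑' n, F n * (c ^ n * w root) := by
  have hS : S = ⋃ n, rankLevel S r n := by ext I; simp [rankLevel]
  have hdisj : (univ : Set ℕ).PairwiseDisjoint (rankLevel S r) := fun m _ n _ hmn =>
    disjoint_left.2 fun I hm hn => hmn (hm.2.symm.trans hn.2)
  rw [tsum_congr_set_coe (fun I => F (r I) * w I) hS,
    ENNReal.tsum_biUnion (f := fun I => F (r I) * w I) hdisj]
  refine tsum_congr fun n => ?_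
  rw [← tsum_rankLevel hroot_mem hr_root hroot hparent hchild, ← ENNReal.tsum_mul_left]
  exact tsum_congr fun I => by rw [I.2.2]

lemma tsum_ofReal_mul_pow_rank {a d ρ : ℝ} (ha : 0 ≤ a) (hd : 0 ≤ d) (hρ : 0 ≤ ρ)
    (hdρ : d * ρ < 1) (hroot_mem : root ∈ S) (hr_root : r root = 0)
    (hroot : ∀ I ∈ S, r I = 0 → I = root)
    (hparent : ∀ J ∈ S, 0 < r J → parent J ∈ S ∧ r J = r (parent J) + 1)
    (hchild : ∀ I ∈ S, ∑' J : childSet S r parent I, w J = ENNReal.ofReal ρ * w I) :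
    ∑' I : S, ENNReal.ofReal (a * d ^ r I) * w I =
      ENNReal.ofReal (a / (1 - d * ρ)) * w root := by
  rw [tsum_mul_rank hroot_mem hr_root hroot hparent hchild (fun n => ENNReal.ofReal (a * d ^ n))]
  have hterm : ∀ n : ℕ, ENNReal.ofReal (a * d ^ n) * (ENNReal.ofReal ρ ^ n * w root) =
      ENNReal.ofReal a * ENNReal.ofReal (d * ρ) ^ n * w root := fun n => by
    rw [ENNReal.ofReal_mul ha, ENNReal.ofReal_pow hd, ENNReal.ofReal_mul hd, mul_pow]; ring
  have hsub : 1 - ENNReal.ofReal (d * ρ) = ENNReal.ofReal (1 - d * ρ) := by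
    rw [ENNReal.ofReal_sub 1 (by positivity), ENNReal.ofReal_one]
  rw [tsum_congr hterm, ENNReal.tsum_mul_right, ENNReal.tsum_mul_left, ENNReal.tsum_geometric,
    hsub, div_eq_mul_inv, ENNReal.ofReal_mul ha, ENNReal.ofReal_inv_of_pos (by linarith)]

lemma tsum_childSet_of_eq_mul {w' : β → ℝ≥0∞} {b : ℝ≥0∞} (hw' : ∀ I ∈ S, w' I = b * w I)
    (hchild : ∀ I ∈ S, ∑' J : childSet S r parent I, w J = c * w I) (I : β) (hI : I ∈ S) :
    ∑' J : childSet S r parent I, w' J = c * w' I := by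
  rw [tsum_congr fun J : childSet S r parent I => hw' J J.2.1, ENNReal.tsum_mul_left,
    hchild I hI, hw' I hI, mul_left_comm]

end RankedTree

section StepFunction

variable {ι X : Type*} {A : ι → Set X}

lemma map_tsum_indicator_of_unique_mem {M N : Type*} [AddCommMonoid M] [TopologicalSpace M]
    [AddCommMonoid N] [TopologicalSpace N] (g : M → N) (hg : g 0 = 0) (v : ι → M) {x : X}
    (hx : ∀ i j, x ∈ A i → x ∈ A j → i = j) :
    g (∑' i, (A i).indicator (fun _ => v i) x) = ∑' i, (A i).indicator (fun _ => g (v i)) x := by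
  by_cases hmem : ∃ i, x ∈ A i
  · obtain ⟨i, hi⟩ := hmem
    have hnot : ∀ j ≠ i, x ∉ A j := fun j hji hj => hji (hx j i hj hi)
    rw [tsum_eq_single i fun j hj => indicator_of_notMem (hnot j hj) _,
      tsum_eq_single i fun j hj => indicator_of_notMem (hnot j hj) _,
      indicator_of_mem hi, indicator_of_mem hi]
  · rw [not_exists] at hmem
    simp only [indicator_of_notMem (hmem _), tsum_zero, hg]

variable [MeasurableSpace X] {μ : Measure X} [Countable ι]

lemma ae_unique_mem_of_pairwise_aedisjoint (hd : Pairwise (AEDisjoint μ on A)) :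
    ∀ᵐ x ∂μ, ∀ i j, x ∈ A i → x ∈ A j → i = j := by
  refine ae_all_iff.2 fun i => ae_all_iff.2 fun j => ?_
  by_cases hij : i = j
  · exact Filter.Eventually.of_forall fun _ _ _ => hij
  · filter_upwards [measure_eq_zero_iff_ae_notMem.1 (hd hij)] with x hx hi hj
    exact absurd ⟨hi, hj⟩ hx

lemma integral_tsum_indicator (hA : ∀ i, MeasurableSet (A i)) (hd : Pairwise (AEDisjoint μ on A))
    {v : ι → ℝ} (hv : ∀ i, 0 ≤ v i) :
    ∫ x, ∑' i, (A i).indicator (fun _ => v i) x ∂μ =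
      (∑' i, ENNReal.ofReal (v i) * μ (A i)).toReal := by
  set G : X → ℝ≥0∞ := fun x => ∑' i, (A i).indicator (fun _ => ENNReal.ofReal (v i)) x
  have hG : ∀ᵐ x ∂μ, ENNReal.ofReal (∑' i, (A i).indicator (fun _ => v i) x) = G x :=
    (ae_unique_mem_of_pairwise_aedisjoint hd).mono fun x hx =>
      map_tsum_indicator_of_unique_mem ENNReal.ofReal ENNReal.ofReal_zero v hx
  have hGm : ∀ i, Measurable ((A i).indicator fun _ => ENNReal.ofReal (v i)) :=
    fun i => measurable_const.indicator (hA i)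
  have hψ : ∀ᵐ x ∂μ, ∑' i, (A i).indicator (fun _ => v i) x = (G x).toReal :=
    hG.mono fun x hx => by
      rw [← hx, ENNReal.toReal_ofReal (tsum_nonneg fun i => indicator_nonneg (fun _ _ => hv i) _)]
  rw [integral_congr_ae hψ, integral_toReal (Measurable.tsum hGm).aemeasurable
    (hG.mono fun x hx => (hx ▸ ENNReal.ofReal_lt_top : G x < ∞)),
    lintegral_tsum fun i => (hGm i).aemeasurable]
  exact congrArg ENNReal.toReal (tsum_congr fun i => lintegral_indicator_const (hA i) _)

end StepFunction

section TreeStepFunction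

variable {β X : Type*} [MeasurableSpace X] {μ : Measure X} {S : Set β} [Countable S]
  {r : β → ℕ} {parent : β → β} {root : β} {A : β → Set X}

lemma integral_tsum_indicator_of_rank {a d ρ : ℝ} (ha : 0 ≤ a) (hd : 0 ≤ d) (hρ : 0 ≤ ρ)
    (hdρ : d * ρ < 1) (hroot_mem : root ∈ S) (hr_root : r root = 0)
    (hroot : ∀ I ∈ S, r I = 0 → I = root)
    (hparent : ∀ J ∈ S, 0 < r J → parent J ∈ S ∧ r J = r (parent J) + 1)
    (hchild : ∀ I ∈ S, ∑' J : childSet S r parent I, μ (A J) = ENNReal.ofReal ρ * μ (A I))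
    (hA : ∀ I : S, MeasurableSet (A I)) (hdisj : Pairwise (AEDisjoint μ on fun I : S => A I))
    {u : S → ℝ} (hu0 : ∀ I, 0 ≤ u I) (hu : ∀ I : S, μ (A I) ≠ 0 → u I = a * d ^ r I) :
    ∫ x, ∑' I : S, (A I).indicator (fun _ => u I) x ∂μ =
      a / (1 - d * ρ) * (μ (A root)).toReal := by
  have hterm : ∀ I : S,
      ENNReal.ofReal (u I) * μ (A I) = ENNReal.ofReal (a * d ^ r I) * μ (A I) := fun I => by
      by_cases hI : μ (A I) = 0
      · simp only [hI, mul_zero]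
      · rw [hu I hI]
  rw [integral_tsum_indicator hA hdisj hu0, tsum_congr hterm,
    tsum_ofReal_mul_pow_rank (w := fun I => μ (A I)) ha hd hρ hdρ hroot_mem hr_root hroot hparent
      hchild,
    ENNReal.toReal_mul, ENNReal.toReal_ofReal (div_nonneg ha (by linarith))]

end TreeStepFunction

section PhiAlphaAlgebra

variable {α γ q q' f z : ℝ}

lemma mul_rpow_div_mul_rpow {a m : ℝ} (ha : 0 < a) (hm : 0 < m) (x p : ℝ) :
    x * m ^ p / (a * m) ^ p = x * a ^ (-p) := by
  have hmp : m ^ p ≠ 0 := (Real.rpow_pos_of_pos hm p).ne'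
  have hap : a ^ p ≠ 0 := (Real.rpow_pos_of_pos ha p).ne'
  rw [Real.mul_rpow ha.le hm.le, Real.rpow_neg ha.le]
  field_simp

lemma rpow_neg_one_div_mul_rpow_neg_one_div (hα : 0 < α) (hq' : 1 / q + 1 / q' = 1) :
    α ^ (-(1 / q')) * α ^ (-(1 / q)) = α⁻¹ := by
  rw [← Real.rpow_add hα, show -(1 / q') + -(1 / q) = -1 by linarith, Real.rpow_neg_one]

lemma phi_alpha_one_sub_gamma_mul (hα1 : α < 1) (hz : z ≠ 0)
    (hγ : γ = (z - α) / (z * (1 - α))) :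
    1 - γ * (1 - α) = α / z := by
  have : 1 - α ≠ 0 := by linarith
  rw [hγ]
  field_simp
  ring

lemma phi_alpha_coeff {lam m : ℝ} (hα0 : 0 < α) (hα1 : α < 1) (hz : z ≠ 0)
    (hq' : 1 / q + 1 / q' = 1) (hγ : γ = (z - α) / (z * (1 - α)))
    (hlam : lam = f * α ^ (-(1 / q')) * (1 - γ * (1 - α))) (hm : 0 < m) (g : ℝ) :
    lam * g * m ^ (1 / q) / (α * m) ^ (1 / q) = f / z * g := by
  calc lam * g * m ^ (1 / q) / (α * m) ^ (1 / q)
      = f * (α ^ (-(1 / q')) * α ^ (-(1 / q))) * (α / z) * g := by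
        rw [mul_rpow_div_mul_rpow hα0 hm, hlam, phi_alpha_one_sub_gamma_mul hα1 hz hγ]; ring
    _ = f / z * g := by
        rw [rpow_neg_one_div_mul_rpow_neg_one_div hα0 hq']
        field_simp

lemma phi_alpha_mean (hα0 : 0 < α) (hα1 : α < 1) (hz : z ≠ 0)
    (hγ : γ = (z - α) / (z * (1 - α))) : f / z / (1 - γ * (1 - α)) * α = f := by
  rw [phi_alpha_one_sub_gamma_mul hα1 hz hγ]
  field_simp

lemma phi_alpha_power_mean (hα0 : 0 < α) (hα1 : α < 1) (hαz : α < z) (hf : 0 ≤ f)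
    (hγ : γ = (z - α) / (z * (1 - α))) (hγq : γ ^ q * (1 - α) < 1) :
    (f / z) ^ q / (1 - γ ^ q * (1 - α)) * α =
      f ^ q * α * (1 - α) ^ (q - 1) / (-(z - α) ^ q + (1 - α) ^ (q - 1) * z ^ q) := by
  have h1α : 0 < 1 - α := by linarith
  have hz : 0 < z := by linarith
  have hP : 0 < z ^ q := Real.rpow_pos_of_pos hz q
  have hQ : 0 < (1 - α) ^ (q - 1) := Real.rpow_pos_of_pos h1α (q - 1)
  have hγq_eq : γ ^ q * (1 - α) = (z - α) ^ q / (z ^ q * (1 - α) ^ (q - 1)) := by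
    have hsplit : (1 - α) ^ q = (1 - α) ^ (q - 1) * (1 - α) := by
      rw [← Real.rpow_add_one h1α.ne', sub_add_cancel]
    rw [hγ, Real.div_rpow (by linarith) (by positivity), Real.mul_rpow hz.le h1α.le, hsplit]
    field_simp
  rw [hγq_eq, div_lt_one (by positivity)] at hγq
  rw [hγq_eq, Real.div_rpow hf hz.le, one_sub_div (by positivity),
    show -(z - α) ^ q + (1 - α) ^ (q - 1) * z ^ q = z ^ q * (1 - α) ^ (q - 1) - (z - α) ^ q by ring]
  have hD : z ^ q * (1 - α) ^ (q - 1) - (z - α) ^ q ≠ 0 := by linarith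
  field_simp

end PhiAlphaAlgebra

theorem integrals_of_phi_alpha_general {X : Type*} [MeasurableSpace X]
    (μ : Measure X) [IsProbabilityMeasure μ]
    (α γ lam q q' f z : ℝ) (hα0 : 0 < α) (hα1 : α < 1) (hq : 1 < q)
    (hq' : 1 / q + 1 / q' = 1) (hf : 0 < f) (hz : 1 < z)
    (hγdef : γ = (z - α) / (z * (1 - α)))
    (hγ1 : γ * (1 - α) < 1) (hγq : γ ^ q * (1 - α) < 1)
    (hlamdef : lam = f * α ^ (-(1 / q')) * (1 - γ * (1 - α)))
    (S : Set (Set X)) (hScount : S.Countable)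
    (r : Set X → ℕ) (parent : Set X → Set X)
    (huniv : Set.univ ∈ S) (hr0 : r Set.univ = 0)
    (hroot : ∀ I ∈ S, r I = 0 → I = Set.univ)
    (hparent : ∀ J ∈ S, 0 < r J →
      parent J ∈ S ∧ J ⊆ parent J ∧ r J = r (parent J) + 1)
    (hchild : ∀ I ∈ S,
      ∑' J : {J : Set X // J ∈ S ∧ parent J = I ∧ r J = r I + 1}, μ (J : Set X) =
        ENNReal.ofReal (1 - α) * μ I)
    (A : Set X → Set X)
    (hAmeas : ∀ I ∈ S, MeasurableSet (A I))
    (hAmes : ∀ I ∈ S, μ (A I) = ENNReal.ofReal α * μ I)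
    (hAdisj : ∀ I ∈ S, ∀ J ∈ S, I ≠ J → μ (A I ∩ A J) = 0)
    (φ : X → ℝ)
    (hφdef : φ = fun x =>
      ∑' I : S,
        (lam * γ ^ r (I : Set X) * ((μ (I : Set X)).toReal) ^ (1 / q) /
            (α * (μ (I : Set X)).toReal) ^ (1 / q)) *
          Set.indicator (A (I : Set X)) (fun _ => (1 : ℝ)) x) :
    (∫ x, φ x ∂μ) = f ∧
    (∫ x, φ x ^ q ∂μ) =
      f ^ q * α * (1 - α) ^ (q - 1) /
        (-(z - α) ^ q + (1 - α) ^ (q - 1) * z ^ q) := by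
  have := hScount.to_subtype
  have hz0 : 0 < z := by linarith
  have hγ0 : 0 ≤ γ := by rw [hγdef]; exact div_nonneg (by linarith) (by nlinarith)
  have hlam : 0 ≤ lam := by rw [hlamdef]; have := sub_pos.2 hγ1; positivity
  set v : S → ℝ :=
    fun I => lam * γ ^ r I * (μ I).toReal ^ (1 / q) / (α * (μ I).toReal) ^ (1 / q)
  -- On a null cell `I` the coefficient `v I` is the junk value `0 / 0`, but `A I` is null too.
  have hv : ∀ I : S, μ (A I) ≠ 0 → v I = f / z * γ ^ r I := fun I hAI => by
    have hI : μ I ≠ 0 := fun hI => hAI (by rw [hAmes I I.2, hI, mul_zero])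
    exact phi_alpha_coeff hα0 hα1 hz0.ne' hq' hγdef hlamdef
      (ENNReal.toReal_pos hI (measure_ne_top μ I)) _
  have hvq : ∀ I : S, μ (A I) ≠ 0 → v I ^ q = (f / z) ^ q * (γ ^ q) ^ r I := fun I hI => by
    rw [hv I hI, Real.mul_rpow (by positivity) (by positivity), ← Real.rpow_pow_comm hγ0]
  have hφ : φ = fun x => ∑' I : S, (A I).indicator (fun _ => v I) x := by
    rw [hφdef]
    exact funext fun x => tsum_congr fun I => by rw [← indicator_const_mul, mul_one]
  have hdisj : Pairwise (AEDisjoint μ on fun I : S => A I) := fun I J hIJ =>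
    hAdisj I I.2 J J.2 (Subtype.coe_injective.ne hIJ)
  have hφq : ∀ᵐ x ∂μ, φ x ^ q = ∑' I : S, (A I).indicator (fun _ => v I ^ q) x :=
    (ae_unique_mem_of_pairwise_aedisjoint hdisj).mono fun x hx => by
      rw [hφ]
      exact map_tsum_indicator_of_unique_mem (· ^ q) (Real.zero_rpow (by linarith)) v hx
  have hparent' : ∀ J ∈ S, 0 < r J → parent J ∈ S ∧ r J = r (parent J) + 1 :=
    fun J hJ hrJ => ⟨(hparent J hJ hrJ).1, (hparent J hJ hrJ).2.2⟩
  have hchildA := tsum_childSet_of_eq_mul (w := fun I => μ I) hAmes hchild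
  have hAuniv : (μ (A univ)).toReal = α := by
    rw [hAmes _ huniv, measure_univ, mul_one, ENNReal.toReal_ofReal hα0.le]
  constructor
  · rw [hφ, integral_tsum_indicator_of_rank (by positivity) hγ0 (by linarith) hγ1 huniv hr0 hroot
      hparent' hchildA (fun I => hAmeas I I.2) hdisj (fun I => by positivity) hv, hAuniv,
      phi_alpha_mean hα0 hα1 hz0.ne' hγdef]
  · rw [integral_congr_ae hφq, integral_tsum_indicator_of_rank (by positivity) (by positivity)
      (by linarith) hγq huniv hr0 hroot hparent' hchildA (fun I => hAmeas I I.2) hdisj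
      (fun I => by positivity) hvq, hAuniv,
      phi_alpha_power_mean hα0 hα1 (by linarith) hf.le hγdef hγq]

/-- Equations (3.11)–(3.12): let `φ_α = Σ_{I ∈ 𝒮} (x_I / a_I^{1/q}) χ_{A_I}` where the
`A_I ⊆ I` are pairwise almost disjoint, cover `X` up to measure zero, and satisfy
`μ(A_I) = α μ(I)`; here `x_I = λ γ^{r(I)} μ(I)^{1/q}`, `a_I = α μ(I)`,
`λ = f α^{-1/q'} (1 - γ(1-α))` and `γ = (z-α)/(z(1-α))`. Then `∫_X φ_α dμ = f` and
`∫_X φ_α^q dμ = f^q α (1-α)^{q-1} / (-(z-α)^q + (1-α)^{q-1} z^q)`. -/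
theorem integrals_of_phi_alpha {X : Type*} [MeasurableSpace X]
    (μ : Measure X) [IsProbabilityMeasure μ]
    (α γ lam q q' f z : ℝ) (hα0 : 0 < α) (hα1 : α < 1) (hq : 1 < q)
    (hq' : 1 / q + 1 / q' = 1) (hf : 0 < f) (hz : 1 < z)
    (hγdef : γ = (z - α) / (z * (1 - α)))
    (hγ1 : γ * (1 - α) < 1) (hγq : γ ^ q * (1 - α) < 1)
    (hlamdef : lam = f * α ^ (-(1 / q')) * (1 - γ * (1 - α)))
    (S : Set (Set X)) (hScount : S.Countable)
    (r : Set X → ℕ) (parent : Set X → Set X)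
    (huniv : Set.univ ∈ S) (hr0 : r Set.univ = 0)
    (hroot : ∀ I ∈ S, r I = 0 → I = Set.univ)
    (hparent : ∀ J ∈ S, 0 < r J →
      parent J ∈ S ∧ J ⊆ parent J ∧ r J = r (parent J) + 1)
    (hchild : ∀ I ∈ S,
      ∑' J : {J : Set X // J ∈ S ∧ parent J = I ∧ r J = r I + 1}, μ (J : Set X) =
        ENNReal.ofReal (1 - α) * μ I)
    (hanc : ∀ I ∈ S, ∀ J ∈ S, r I < r J → J ⊆ I → parent J ⊆ I)
    (hself : ∀ I ∈ S, ∀ J ∈ S, J ⊆ I → r J = r I → J = I)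
    (A : Set X → Set X)
    (hAmeas : ∀ I ∈ S, MeasurableSet (A I))
    (hAsub : ∀ I ∈ S, A I ⊆ I)
    (hAmes : ∀ I ∈ S, μ (A I) = ENNReal.ofReal α * μ I)
    (hAdisj : ∀ I ∈ S, ∀ J ∈ S, I ≠ J → μ (A I ∩ A J) = 0)
    (hAcover : μ (Set.univ \ ⋃ I ∈ S, A I) = 0)
    (φ : X → ℝ)
    (hφdef : φ = fun x =>
      ∑' I : S,
        (lam * γ ^ r (I : Set X) * ((μ (I : Set X)).toReal) ^ (1 / q) /
            (α * (μ (I : Set X)).toReal) ^ (1 / q)) *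
          Set.indicator (A (I : Set X)) (fun _ => (1 : ℝ)) x) :
    (∫ x, φ x ∂μ) = f ∧
    (∫ x, φ x ^ q ∂μ) =
      f ^ q * α * (1 - α) ^ (q - 1) /
        (-(z - α) ^ q + (1 - α) ^ (q - 1) * z ^ q) :=
  integrals_of_phi_alpha_general μ α γ lam q q' f z hα0 hα1 hq hq' hf hz hγdef hγ1 hγq hlamdef S
    hScount r parent huniv hr0 hroot hparent hchild A hAmeas hAmes hAdisj φ hφdef
end

section
/- For p > 1 and 0 < α < 1 with z > α and γ = (z−α)/(z(1−α)) satisfying γ^p(1−α) < 1, the series Σ_{m ≥ 0} (γ^p (1−α))^m equals z^p(1−α)^{p−1} / (z^p(1−α)^{p−1} − (z−α)^p), and therefore if z = z(α) → ω as α → 0⁺, then f^p α (1−α)^{p−1} / (−(z−α)^p + (1−α)^{p−1} z^p) → f^p / H_p(ω), where H_p(z) = −(p−1)z^p + p z^{p−1}. -/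
/-!
With `r = γ^p (1-α) = (z-α)^p / (z^p (1-α)^(p-1))` the series is `1 / (1 - r)`.
For the limit, divide numerator and denominator by `α`: the denominator becomes
`z^p ((1-α)^(p-1) - 1) / α + (z^p - (z-α)^p) / α`, a sum of two difference quotients of `rpow`.
Since `z` moves with `α`, the second one needs strict differentiability of `x ↦ x^p` at `ω`;
they converge to `-(p-1) ω^p` and `p ω^(p-1)`, whose sum `H_p(ω)` is positive for `ω < p/(p-1)`.
-/

open Set Filter Topology

theorem HasStrictDerivAt.tendsto_slope_of_tendsto {𝕜 ι : Type*} [NontriviallyNormedField 𝕜]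
    {f : 𝕜 → 𝕜} {f' a : 𝕜} {l : Filter ι} {x y : ι → 𝕜} (hf : HasStrictDerivAt f f' a)
    (hx : Tendsto x l (𝓝 a)) (hy : Tendsto y l (𝓝 a)) (hxy : ∀ᶠ t in l, x t ≠ y t) :
    Tendsto (fun t => (f (x t) - f (y t)) / (x t - y t)) l (𝓝 f') := by
  have hsmall : (fun t => f (x t) - f (y t) - (x t - y t) * f') =o[l] fun t => x t - y t :=
    (hasFDerivAtFilter_iff_isLittleO.mp hf).comp_tendsto (hx.prodMk_nhds hy)
  have := hsmall.tendsto_div_nhds_zero.add_const f'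
  rw [zero_add] at this
  refine this.congr' (hxy.mono fun t ht => ?_)
  field_simp [sub_ne_zero.mpr ht]
  ring

theorem tendsto_one_sub_rpow_mul_rpow_sub_rpow_div (p : ℝ) {ω : ℝ} {l : Filter ℝ} {z : ℝ → ℝ}
    (hl : l ≤ 𝓝[≠] 0) (hz : Tendsto z l (𝓝 ω)) (hω : ω ≠ 0) :
    Tendsto (fun α => (-(z α - α) ^ p + (1 - α) ^ (p - 1) * z α ^ p) / α) l
      (𝓝 (-(p - 1) * ω ^ p + p * ω ^ (p - 1))) := by
  have hα : Tendsto id l (𝓝 0) := tendsto_id.mono_left (hl.trans nhdsWithin_le_nhds)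
  have hα0 : ∀ᶠ α in l, α ≠ 0 := hl self_mem_nhdsWithin
  have hfactor : Tendsto (fun α => ((1 - α) ^ (p - 1) - 1 ^ (p - 1)) / ((1 - α) - 1)) l
      (𝓝 ((p - 1) * 1 ^ (p - 1 - 1))) :=
    (Real.hasStrictDerivAt_rpow_const_of_ne one_ne_zero (p - 1)).tendsto_slope_of_tendsto
      (by simpa using tendsto_const_nhds.sub hα) tendsto_const_nhds
      (hα0.mono fun α h heq => h (by linarith))
  have hshift : Tendsto (fun α => (z α ^ p - (z α - α) ^ p) / (z α - (z α - α))) l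
      (𝓝 (p * ω ^ (p - 1))) :=
    (Real.hasStrictDerivAt_rpow_const_of_ne hω p).tendsto_slope_of_tendsto hz
      (by simpa using hz.sub hα) (hα0.mono fun α h heq => h (by linarith))
  have hsum := ((hz.rpow_const (p := p) (Or.inl hω)).mul hfactor).neg.add hshift
  simp only [Real.one_rpow, mul_one] at hsum
  rw [show -(p - 1) * ω ^ p = -(ω ^ p * (p - 1)) by ring]
  refine hsum.congr' (hα0.mono fun α h => ?_)
  rw [sub_sub_cancel_left, sub_sub_cancel]
  field_simp
  ring

theorem tsum_geometric_div_of_lt_one {A B : ℝ} (hA : A ≠ 0) (h₀ : 0 ≤ B / A) (h₁ : B / A < 1) :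
    ∑' m : ℕ, (B / A) ^ m = A / (A - B) := by
  rw [tsum_geometric_of_lt_one h₀ h₁, one_sub_div hA, inv_div]

theorem div_mul_rpow_mul_eq {x y c : ℝ} (p : ℝ) (hx : 0 ≤ x) (hy : 0 ≤ y) (hc : 0 < c) :
    (x / (y * c)) ^ p * c = x ^ p / (y ^ p * c ^ (p - 1)) := by
  rw [Real.div_rpow hx (by positivity), Real.mul_rpow hy hc.le, Real.rpow_sub_one hc.ne']
  field_simp

theorem neg_sub_one_mul_rpow_add_mul_rpow_sub_one_pos {p ω : ℝ} (hp : 1 < p) (hω : 0 < ω)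
    (hωp : ω < p / (p - 1)) : 0 < -(p - 1) * ω ^ p + p * ω ^ (p - 1) := by
  have hbound : (p - 1) * ω < p := (lt_div_iff₀' (by linarith)).mp hωp
  have hfactor : -(p - 1) * ω ^ p + p * ω ^ (p - 1) = ω ^ (p - 1) * (p - (p - 1) * ω) := by
    rw [Real.rpow_sub_one hω.ne']
    field_simp
    ring
  rw [hfactor]
  exact mul_pos (by positivity) (by linarith)

theorem geometric_series_and_limit_general (p f : ℝ) (hp : 1 < p)
    (z : ℝ → ℝ) (hz : ∀ α ∈ Ioo (0 : ℝ) 1, 1 < z α)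
    (ω : ℝ) (hω1 : 1 ≤ ω) (hωp : ω < p / (p - 1))
    (hlim : Tendsto z (nhdsWithin 0 (Ioi 0)) (nhds ω)) :
    (∀ α ∈ Ioo (0 : ℝ) 1, ∀ γ : ℝ, γ = (z α - α) / (z α * (1 - α)) →
      γ ^ p * (1 - α) < 1 →
      ∑' m : ℕ, (γ ^ p * (1 - α)) ^ m =
        (z α) ^ p * (1 - α) ^ (p - 1) /
          ((z α) ^ p * (1 - α) ^ (p - 1) - (z α - α) ^ p)) ∧
    Tendsto
      (fun α : ℝ => f ^ p * α * (1 - α) ^ (p - 1) /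
        (-(z α - α) ^ p + (1 - α) ^ (p - 1) * (z α) ^ p))
      (nhdsWithin 0 (Ioi 0))
      (nhds (f ^ p / (-(p - 1) * ω ^ p + p * ω ^ (p - 1)))) := by
  refine ⟨?_, ?_⟩
  · rintro α ⟨hα0, hα1⟩ γ rfl hlt
    have hzα : 1 < z α := hz α ⟨hα0, hα1⟩
    rw [div_mul_rpow_mul_eq p (by linarith) (by linarith) (by linarith)] at hlt ⊢
    have hA : 0 < z α ^ p * (1 - α) ^ (p - 1) :=
      mul_pos (Real.rpow_pos_of_pos (by linarith) _) (Real.rpow_pos_of_pos (by linarith) _)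
    exact tsum_geometric_div_of_lt_one hA.ne'
      (div_nonneg (Real.rpow_nonneg (by linarith) _) hA.le) hlt
  · have hω0 : 0 < ω := by linarith
    have hdenom := tendsto_one_sub_rpow_mul_rpow_sub_rpow_div p (nhdsGT_le_nhdsNE 0) hlim hω0.ne'
    have hnum : Tendsto (fun α : ℝ => f ^ p * (1 - α) ^ (p - 1)) (𝓝[>] 0) (𝓝 (f ^ p)) := by
      have hsub : Tendsto (fun α : ℝ => 1 - α) (𝓝[>] 0) (𝓝 1) :=
        ((continuous_const.sub continuous_id).tendsto' 0 1 (sub_zero 1)).mono_left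
          nhdsWithin_le_nhds
      simpa using (hsub.rpow_const (p := p - 1) (Or.inl one_ne_zero)).const_mul (f ^ p)
    refine (hnum.div hdenom (neg_sub_one_mul_rpow_add_mul_rpow_sub_one_pos hp hω0 hωp).ne').congr
      fun α => ?_
    rw [Pi.div_apply, div_div_eq_mul_div, mul_right_comm]

/-- For `p > 1`, `0 < α < 1` and `z > α` with `γ = (z-α)/(z(1-α))` satisfying
`γ^p(1-α) < 1`, the geometric series `Σ_m (γ^p(1-α))^m` equals
`z^p(1-α)^{p-1} / (z^p(1-α)^{p-1} - (z-α)^p)`; consequently, if `z = z(α) → ω` as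
`α → 0⁺` then `f^p α (1-α)^{p-1} / (-(z-α)^p + (1-α)^{p-1} z^p) → f^p / H_p(ω)`,
where `H_p(z) = -(p-1)z^p + p z^{p-1}`. -/
theorem geometric_series_and_limit (p f : ℝ) (hp : 1 < p) (hf : 0 < f)
    (z : ℝ → ℝ) (hz : ∀ α ∈ Ioo (0 : ℝ) 1, 1 < z α)
    (ω : ℝ) (hω1 : 1 ≤ ω) (hωp : ω < p / (p - 1))
    (hlim : Tendsto z (nhdsWithin 0 (Ioi 0)) (nhds ω)) :
    (∀ α ∈ Ioo (0 : ℝ) 1, ∀ γ : ℝ, γ = (z α - α) / (z α * (1 - α)) →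
      γ ^ p * (1 - α) < 1 →
      ∑' m : ℕ, (γ ^ p * (1 - α)) ^ m =
        (z α) ^ p * (1 - α) ^ (p - 1) /
          ((z α) ^ p * (1 - α) ^ (p - 1) - (z α - α) ^ p)) ∧
    Tendsto
      (fun α : ℝ => f ^ p * α * (1 - α) ^ (p - 1) /
        (-(z α - α) ^ p + (1 - α) ^ (p - 1) * (z α) ^ p))
      (nhdsWithin 0 (Ioi 0))
      (nhds (f ^ p / (-(p - 1) * ω ^ p + p * ω ^ (p - 1)))) :=
  geometric_series_and_limit_general p f hp z hz ω hω1 hωp hlim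
end
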